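/- arXiv:1203.2869 — 7 statements merged into one kernel-verified Lean document; each statement's English description precedes it below -/
import Mathlib

section
/- For the Markov chain (M_n) with P(ξ_n = ±1 | M_n = m) = (m±1)/(2m), one has M_n / √(n log n) → 0 almost surely as n → ∞. -/
open MeasureTheory Filter
open scoped ENNReal NNReal


private lemma gcb_A4 (m' : ℕ) (hm' : 1 ≤ m') :
    (((m' : ℝ) + 1) * ((m' + 1 : ℕ) : ℝ) ^ 4 + ((m' : ℝ) - 1) * ((m' - 1 : ℕ) : ℝ) ^ 4)
      / (2 * (m' : ℝ)) = (m' : ℝ) ^ 4 + 10 * (m' : ℝ) ^ 2 + 5 := by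
  have hx : (1 : ℝ) ≤ (m' : ℝ) := by exact_mod_cast hm'
  have hne : (2 : ℝ) * (m' : ℝ) ≠ 0 := by positivity
  push_cast [Nat.cast_sub hm']
  field_simp
  ring

private lemma gcb_A2 (m' : ℕ) (hm' : 1 ≤ m') :
    (((m' : ℝ) + 1) * ((m' + 1 : ℕ) : ℝ) ^ 2 + ((m' : ℝ) - 1) * ((m' - 1 : ℕ) : ℝ) ^ 2)
      / (2 * (m' : ℝ)) = (m' : ℝ) ^ 2 + 3 := by
  have hx : (1 : ℝ) ≤ (m' : ℝ) := by exact_mod_cast hm'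
  have hne : (2 : ℝ) * (m' : ℝ) ≠ 0 := by positivity
  push_cast [Nat.cast_sub hm']
  field_simp
  ring



private lemma gcb_key
    {Ω : Type*} [MeasurableSpace Ω] (μ : Measure Ω) [IsProbabilityMeasure μ]
    (M : ℕ → Ω → ℕ) (hMmeas : ∀ n, Measurable (M n))
    (hpos : ∀ n ω, 1 ≤ M n ω)
    (hstep : ∀ n ω, M (n + 1) ω = M n ω + 1 ∨ M (n + 1) ω + 1 = M n ω)
    (hup : ∀ (n m : ℕ) (A : Set Ω),
      MeasurableSet[(Filtration.natural M
        (fun n => (hMmeas n).stronglyMeasurable)) n] A →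
      μ (A ∩ {ω | M n ω = m} ∩ {ω | M (n + 1) ω = M n ω + 1})
        = ENNReal.ofReal (((m : ℝ) + 1) / (2 * m))
            * μ (A ∩ {ω | M n ω = m}))
    (hdown : ∀ (n m : ℕ) (A : Set Ω),
      MeasurableSet[(Filtration.natural M
        (fun n => (hMmeas n).stronglyMeasurable)) n] A →
      μ (A ∩ {ω | M n ω = m} ∩ {ω | M (n + 1) ω + 1 = M n ω})
        = ENNReal.ofReal (((m : ℝ) - 1) / (2 * m))
            * μ (A ∩ {ω | M n ω = m}))
    (f : ℕ → ℝ) (n K : ℕ) (A : Set Ω)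
    (hA : MeasurableSet[(Filtration.natural M
        (fun n => (hMmeas n).stronglyMeasurable)) n] A)
    (hAK : ∀ ω ∈ A, M n ω ≤ K) :
    ∫ ω in A, f (M (n + 1) ω)  ∂μ
      = ∫ ω in A, (fun a : ℕ => (((a : ℝ) + 1) * f (a + 1) + ((a : ℝ) - 1) * f (a - 1))
          / (2 * (a : ℝ))) (M n ω) ∂μ := by
  classical
  set F := Filtration.natural M (fun n => (hMmeas n).stronglyMeasurable) with hF
  set g : ℕ → ℝ := fun a : ℕ => (((a : ℝ) + 1) * f (a + 1) + ((a : ℝ) - 1) * f (a - 1))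
          / (2 * (a : ℝ)) with hg
  have hAmeas : MeasurableSet A := F.le n A hA
  set B : ℕ → Set Ω := fun m' => A ∩ {ω | M n ω = m'} with hB
  have hBmeas : ∀ m', MeasurableSet (B m') := fun m' =>
    hAmeas.inter ((hMmeas n) (measurableSet_singleton m'))
  -- integrability of the two integrands on each piece
  have hintf : ∀ m', IntegrableOn (fun ω => f (M (n + 1) ω)) (B m') μ := by
    intro m'
    refine ⟨(measurable_from_top.comp (hMmeas (n + 1))).aestronglyMeasurable, ?_⟩
    refine HasFiniteIntegral.of_bounded (C := max ‖f (m' + 1)‖ ‖f (m' - 1)‖) ?_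
    refine (ae_restrict_mem (hBmeas m')).mono ?_
    intro ω hω
    rcases hstep n ω with h | h
    · rw [h, hω.2]; exact le_max_left _ _
    · have h2 : M n ω = m' := hω.2
      have : M (n + 1) ω = m' - 1 := by omega
      rw [this]; exact le_max_right _ _
  have hintg : ∀ m', IntegrableOn (fun ω => g (M n ω)) (B m') μ := by
    intro m'
    refine ⟨((measurable_from_top : Measurable g).comp (hMmeas n)).aestronglyMeasurable, ?_⟩
    refine HasFiniteIntegral.of_bounded (C := ‖g m'‖) ?_
    refine (ae_restrict_mem (hBmeas m')).mono ?_
    intro ω hω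
    rw [hω.2]
  -- the per-piece identity
  have piece : ∀ m', ∫ ω in B m', f (M (n + 1) ω) ∂μ = ∫ ω in B m', g (M n ω) ∂μ := by
    intro m'
    rcases Nat.eq_zero_or_pos m' with h0 | h1
    · have hBe : B m' = ∅ := by
        subst h0
        ext ω
        simp only [hB, Set.mem_inter_iff, Set.mem_setOf_eq, Set.mem_empty_iff_false, iff_false]
        rintro ⟨-, h⟩
        have := hpos n ω; omega
      rw [hBe]; simp
    · set U : Set Ω := {ω | M (n + 1) ω = M n ω + 1} with hUdef
      set D : Set Ω := {ω | M (n + 1) ω + 1 = M n ω} with hDdef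
      have hUm : MeasurableSet U :=
        measurableSet_eq_fun (hMmeas (n + 1))
          (measurable_from_top.comp (hMmeas n))
      have hDm : MeasurableSet D :=
        measurableSet_eq_fun
          (measurable_from_top.comp (hMmeas (n + 1))) (hMmeas n)
      have hsplit : B m' = (B m' ∩ U) ∪ (B m' ∩ D) := by
        rw [← Set.inter_union_distrib_left]
        have : U ∪ D = Set.univ := by
          ext ω; simp only [Set.mem_union, hUdef, hDdef, Set.mem_setOf_eq, Set.mem_univ,
            iff_true]
          exact hstep n ω
        rw [this, Set.inter_univ]
      have hdisjUD : Disjoint (B m' ∩ U) (B m' ∩ D) := by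
        rw [Set.disjoint_left]
        rintro ω ⟨-, h1⟩ ⟨-, h2⟩
        simp only [hUdef, hDdef, Set.mem_setOf_eq] at h1 h2
        omega
      have hmu_up : μ (B m' ∩ U) = ENNReal.ofReal (((m' : ℝ) + 1) / (2 * m')) * μ (B m') :=
        hup n m' A hA
      have hmu_down : μ (B m' ∩ D) = ENNReal.ofReal (((m' : ℝ) - 1) / (2 * m')) * μ (B m') :=
        hdown n m' A hA
      have hp1 : (0 : ℝ) ≤ ((m' : ℝ) + 1) / (2 * m') := by positivity
      have hp2 : (0 : ℝ) ≤ ((m' : ℝ) - 1) / (2 * m') := by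
        apply div_nonneg _ (by positivity)
        have : (1 : ℝ) ≤ (m' : ℝ) := by exact_mod_cast h1
        linarith
      have hup_const : ∀ ω ∈ B m' ∩ U, f (M (n + 1) ω) = f (m' + 1) := by
        rintro ω ⟨hω, hωU⟩
        rw [hωU, hω.2]
      have hdown_const : ∀ ω ∈ B m' ∩ D, f (M (n + 1) ω) = f (m' - 1) := by
        rintro ω ⟨hω, hωD⟩
        simp only [hDdef, Set.mem_setOf_eq] at hωD
        have h2 : M n ω = m' := hω.2
        have : M (n + 1) ω = m' - 1 := by omega
        rw [this]
      calc ∫ ω in B m', f (M (n + 1) ω) ∂μ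
          = ∫ ω in B m' ∩ U, f (M (n + 1) ω) ∂μ + ∫ ω in B m' ∩ D, f (M (n + 1) ω) ∂μ := by
            rw [← setIntegral_union hdisjUD ((hBmeas m').inter hDm)
              ((hintf m').mono_set Set.inter_subset_left)
              ((hintf m').mono_set Set.inter_subset_left), ← hsplit]
        _ = (μ (B m' ∩ U)).toReal • f (m' + 1) + (μ (B m' ∩ D)).toReal • f (m' - 1) := by
            rw [setIntegral_congr_fun ((hBmeas m').inter hUm) hup_const,
              setIntegral_congr_fun ((hBmeas m').inter hDm) hdown_const,
              setIntegral_const, setIntegral_const]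
            rfl
        _ = (μ (B m')).toReal • g m' := by
            rw [hmu_up, hmu_down, ENNReal.toReal_mul, ENNReal.toReal_mul,
              ENNReal.toReal_ofReal hp1, ENNReal.toReal_ofReal hp2]
            simp only [smul_eq_mul, hg]
            have hne : (2 : ℝ) * (m' : ℝ) ≠ 0 := by
              have : (1 : ℝ) ≤ (m' : ℝ) := by exact_mod_cast h1
              positivity
            field_simp
        _ = ∫ ω in B m', g (M n ω) ∂μ := by
            rw [setIntegral_congr_fun (hBmeas m') (fun ω hω => by rw [hω.2]),
              setIntegral_const]
            rfl
  -- sum over pieces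
  have hcover : A = ⋃ m' ∈ Finset.range (K + 1), B m' := by
    apply Set.Subset.antisymm
    · intro ω hω
      exact Set.mem_biUnion (Finset.mem_range.mpr (Nat.lt_succ_of_le (hAK ω hω))) ⟨hω, rfl⟩
    · intro ω hω
      simp only [Set.mem_iUnion] at hω
      obtain ⟨m', -, hω1⟩ := hω
      exact hω1.1
  have hdisjB : Set.Pairwise ↑(Finset.range (K + 1)) (Function.onFun Disjoint B) := by
    intro i _ j _ hij
    rw [Function.onFun, Set.disjoint_left]
    rintro ω ⟨-, h1⟩ ⟨-, h2⟩
    exact hij ((h1 : M n ω = i) ▸ (h2 : M n ω = j))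
  rw [hcover,
    integral_biUnion_finset (Finset.range (K + 1)) (fun i _ => hBmeas i) hdisjB
      (fun i _ => hintf i),
    integral_biUnion_finset (Finset.range (K + 1)) (fun i _ => hBmeas i) hdisjB
      (fun i _ => hintg i)]
  exact Finset.sum_congr rfl fun m' _ => piece m'

set_option maxHeartbeats 1000000 in
private lemma gcb_main
    {Ω : Type*} [MeasurableSpace Ω] (μ : Measure Ω) [IsProbabilityMeasure μ]
    (M : ℕ → Ω → ℕ) (hMmeas : ∀ n, Measurable (M n))
    (hpos : ∀ n ω, 1 ≤ M n ω)
    (hstep : ∀ n ω, M (n + 1) ω = M n ω + 1 ∨ M (n + 1) ω + 1 = M n ω)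
    (key : ∀ (f : ℕ → ℝ) (n K : ℕ) (A : Set Ω),
      MeasurableSet[(Filtration.natural M
        (fun n => (hMmeas n).stronglyMeasurable)) n] A →
      (∀ ω ∈ A, M n ω ≤ K) →
      ∫ ω in A, f (M (n + 1) ω) ∂μ
        = ∫ ω in A, (fun a : ℕ => (((a : ℝ) + 1) * f (a + 1) + ((a : ℝ) - 1) * f (a - 1))
            / (2 * (a : ℝ))) (M n ω) ∂μ)
    (m : ℕ) :
    ∀ᵐ ω ∂(μ.restrict {ω' | M 0 ω' ≤ m}),
      Tendsto (fun n : ℕ => (M n ω : ℝ) / Real.sqrt (n * Real.log n)) atTop (nhds 0) := by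
  classical
  set F := Filtration.natural M (fun n => (hMmeas n).stronglyMeasurable) with hFdef
  have hadap : StronglyAdapted F M := Filtration.stronglyAdapted_natural _
  set S : Set Ω := {ω' | M 0 ω' ≤ m} with hSdef
  have hSmeas : MeasurableSet S := hMmeas 0 ((Set.to_countable (Set.Iic m)).measurableSet)
  have hSF : ∀ n, MeasurableSet[F n] S :=
    fun n => F.mono (Nat.zero_le n) S
      ((hadap 0).measurable ((Set.to_countable (Set.Iic m)).measurableSet))
  set ν : Measure Ω := μ.restrict S with hνdef
  have hbound : ∀ n ω, M n ω ≤ M 0 ω + n := by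
    intro n ω
    induction n with
    | zero => simp
    | succ k ih => rcases hstep k ω with h | h <;> omega
  have hSbound : ∀ (n : ℕ), ∀ ω ∈ S, M n ω ≤ m + n := by
    intro n ω hω
    have := hbound n ω
    have : M 0 ω ≤ m := hω
    have := hbound n ω
    omega
  -- integrability helper
  have hbdd_int : ∀ (f : ℕ → ℝ) (i : ℕ) (t : Set Ω) (c : ℝ), MeasurableSet t →
      (∀ ω ∈ t, ‖f (M i ω)‖ ≤ c) → IntegrableOn (fun ω => f (M i ω)) t μ := by
    intro f i t c ht hc
    refine ⟨((measurable_from_top : Measurable f).comp (hMmeas i)).aestronglyMeasurable, ?_⟩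
    exact HasFiniteIntegral.of_bounded ((ae_restrict_mem ht).mono hc)
  -- integrability of powers on subsets of S
  have hint2 : ∀ (k : ℕ) (t : Set Ω), MeasurableSet t → t ⊆ S →
      IntegrableOn (fun ω => ((M k ω : ℝ)) ^ 2) t μ := by
    intro k t ht hts
    refine hbdd_int (fun a : ℕ => (a : ℝ) ^ 2) k t (((m + k : ℕ) : ℝ) ^ 2) ht ?_
    intro ω hω
    have h1 : M k ω ≤ m + k := hSbound k ω (hts hω)
    have h2 : ((M k ω : ℕ) : ℝ) ≤ ((m + k : ℕ) : ℝ) := by exact_mod_cast h1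
    rw [Real.norm_eq_abs, abs_of_nonneg (by positivity)]
    exact pow_le_pow_left₀ (by positivity) h2 2
  have hint4 : ∀ (k : ℕ) (t : Set Ω), MeasurableSet t → t ⊆ S →
      IntegrableOn (fun ω => ((M k ω : ℝ)) ^ 4) t μ := by
    intro k t ht hts
    refine hbdd_int (fun a : ℕ => (a : ℝ) ^ 4) k t (((m + k : ℕ) : ℝ) ^ 4) ht ?_
    intro ω hω
    have h1 : M k ω ≤ m + k := hSbound k ω (hts hω)
    have h2 : ((M k ω : ℕ) : ℝ) ≤ ((m + k : ℕ) : ℝ) := by exact_mod_cast h1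
    rw [Real.norm_eq_abs, abs_of_nonneg (by positivity)]
    exact pow_le_pow_left₀ (by positivity) h2 4
  have hμS1 : (μ S).toReal ≤ 1 := by
    calc (μ S).toReal ≤ (1 : ℝ≥0∞).toReal :=
          ENNReal.toReal_mono ENNReal.one_ne_top prob_le_one
      _ = 1 := by simp
  -- second moment bound
  have ha : ∀ k : ℕ, (∫ ω in S, ((M k ω : ℝ)) ^ 2 ∂μ) ≤ (m : ℝ) ^ 2 + 3 * k := by
    intro k
    induction k with
    | zero =>
      simp only [Nat.cast_zero, mul_zero, add_zero]
      calc (∫ ω in S, ((M 0 ω : ℝ)) ^ 2 ∂μ)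
          ≤ ∫ ω in S, ((m : ℝ)) ^ 2 ∂μ := by
            refine setIntegral_mono_on (hint2 0 S hSmeas subset_rfl)
              (integrableOn_const (measure_lt_top μ S).ne) hSmeas ?_
            intro ω hω
            have h2 : ((M 0 ω : ℕ) : ℝ) ≤ (m : ℝ) := by exact_mod_cast hω
            exact pow_le_pow_left₀ (by positivity) h2 2
        _ = (μ S).toReal • ((m : ℝ)) ^ 2 := setIntegral_const _
        _ ≤ (m : ℝ) ^ 2 := by
            rw [smul_eq_mul]
            exact mul_le_of_le_one_left (by positivity) hμS1
    | succ k ih =>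
      have hkey := key (fun a : ℕ => (a : ℝ) ^ 2) k (m + k) S (hSF k)
        (fun ω hω => hSbound k ω hω)
      beta_reduce at hkey
      have hcongr : ∫ ω in S, (((M k ω : ℝ) + 1) * ((M k ω + 1 : ℕ) : ℝ) ^ 2
            + ((M k ω : ℝ) - 1) * ((M k ω - 1 : ℕ) : ℝ) ^ 2) / (2 * (M k ω : ℝ)) ∂μ
          = ∫ ω in S, (((M k ω : ℝ)) ^ 2 + 3) ∂μ := by
        refine setIntegral_congr_fun hSmeas ?_
        intro ω _
        exact gcb_A2 (M k ω) (hpos k ω)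
      have hadd : ∫ ω in S, (((M k ω : ℝ)) ^ 2 + 3) ∂μ
          = (∫ ω in S, ((M k ω : ℝ)) ^ 2 ∂μ) + 3 * (μ S).toReal := by
        rw [integral_add (hint2 k S hSmeas subset_rfl)
          (integrableOn_const (measure_lt_top μ S).ne)]
        rw [setIntegral_const, smul_eq_mul, mul_comm]
        rfl
      calc (∫ ω in S, ((M (k + 1) ω : ℝ)) ^ 2 ∂μ)
          = (∫ ω in S, ((M k ω : ℝ)) ^ 2 ∂μ) + 3 * (μ S).toReal := by
            rw [hkey, hcongr, hadd]
        _ ≤ ((m : ℝ) ^ 2 + 3 * k) + 3 * 1 := by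
            refine add_le_add ih ?_
            nlinarith [hμS1, ENNReal.toReal_nonneg (a := μ S)]
        _ ≤ (m : ℝ) ^ 2 + 3 * (k + 1 : ℕ) := by push_cast; linarith
  -- fourth moment bound
  set C : ℝ := (m : ℝ) ^ 4 + 10 * (m : ℝ) ^ 2 + 20 with hCdef
  have hCm : 10 * (m : ℝ) ^ 2 + 20 ≤ C := by
    have : (0 : ℝ) ≤ (m : ℝ) ^ 4 := by positivity
    rw [hCdef]; linarith
  have hC0 : (0 : ℝ) ≤ C := by rw [hCdef]; positivity
  have hb : ∀ k : ℕ, (∫ ω in S, ((M k ω : ℝ)) ^ 4 ∂μ) ≤ C * (k + 1) ^ 2 := by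
    intro k
    induction k with
    | zero =>
      calc (∫ ω in S, ((M 0 ω : ℝ)) ^ 4 ∂μ)
          ≤ ∫ ω in S, ((m : ℝ)) ^ 4 ∂μ := by
            refine setIntegral_mono_on (hint4 0 S hSmeas subset_rfl)
              (integrableOn_const (measure_lt_top μ S).ne) hSmeas ?_
            intro ω hω
            have h2 : ((M 0 ω : ℕ) : ℝ) ≤ (m : ℝ) := by exact_mod_cast hω
            exact pow_le_pow_left₀ (by positivity) h2 4
        _ = (μ S).toReal • ((m : ℝ)) ^ 4 := setIntegral_const _
        _ ≤ (m : ℝ) ^ 4 := by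
            rw [smul_eq_mul]
            exact mul_le_of_le_one_left (by positivity) hμS1
        _ ≤ C * (((0 : ℕ) : ℝ) + 1) ^ 2 := by rw [hCdef]; push_cast; nlinarith [sq_nonneg (m : ℝ)]
    | succ k ih =>
      have hkey := key (fun a : ℕ => (a : ℝ) ^ 4) k (m + k) S (hSF k)
        (fun ω hω => hSbound k ω hω)
      beta_reduce at hkey
      have hcongr : ∫ ω in S, (((M k ω : ℝ) + 1) * ((M k ω + 1 : ℕ) : ℝ) ^ 4
            + ((M k ω : ℝ) - 1) * ((M k ω - 1 : ℕ) : ℝ) ^ 4) / (2 * (M k ω : ℝ)) ∂μ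
          = ∫ ω in S, (((M k ω : ℝ)) ^ 4 + (10 * ((M k ω : ℝ)) ^ 2 + 5)) ∂μ := by
        refine setIntegral_congr_fun hSmeas ?_
        intro ω _
        have := gcb_A4 (M k ω) (hpos k ω)
        simp only [Set.mem_setOf_eq]
        rw [this]; ring
      have hadd : ∫ ω in S, (((M k ω : ℝ)) ^ 4 + (10 * ((M k ω : ℝ)) ^ 2 + 5)) ∂μ
          = (∫ ω in S, ((M k ω : ℝ)) ^ 4 ∂μ)
            + (10 * (∫ ω in S, ((M k ω : ℝ)) ^ 2 ∂μ) + 5 * (μ S).toReal) := by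
        have hg2 : IntegrableOn (fun ω => 10 * ((M k ω : ℝ)) ^ 2 + 5) S μ :=
          ((hint2 k S hSmeas subset_rfl).const_mul 10).add
            (integrableOn_const (measure_lt_top μ S).ne)
        rw [integral_add (hint4 k S hSmeas subset_rfl) hg2,
          integral_add ((hint2 k S hSmeas subset_rfl).const_mul 10)
            (integrableOn_const (measure_lt_top μ S).ne),
          integral_const_mul, setIntegral_const, smul_eq_mul, mul_comm (μ.real S) 5]
        rfl
      calc (∫ ω in S, ((M (k + 1) ω : ℝ)) ^ 4 ∂μ)
          = (∫ ω in S, ((M k ω : ℝ)) ^ 4 ∂μ)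
            + (10 * (∫ ω in S, ((M k ω : ℝ)) ^ 2 ∂μ) + 5 * (μ S).toReal) := by
            rw [hkey, hcongr, hadd]
        _ ≤ C * (k + 1) ^ 2 + (10 * ((m : ℝ) ^ 2 + 3 * k) + 5 * 1) := by
            have h5 : 5 * (μ S).toReal ≤ 5 * 1 := by
              nlinarith [hμS1, ENNReal.toReal_nonneg (a := μ S)]
            have h10 : 10 * (∫ ω in S, ((M k ω : ℝ)) ^ 2 ∂μ)
                ≤ 10 * ((m : ℝ) ^ 2 + 3 * k) := by nlinarith [ha k]
            exact add_le_add ih (add_le_add h10 h5)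
        _ ≤ C * ((k + 1 : ℕ) + 1) ^ 2 := by
            push_cast
            have hk0 : (0 : ℝ) ≤ (k : ℝ) := by positivity
            nlinarith [hCm, hk0]
  -- submartingale property of M^4
  have hXadp : StronglyAdapted F (fun k ω => ((M k ω : ℝ)) ^ 4) := by
    intro k
    exact ((measurable_from_top : Measurable (fun a : ℕ => (a : ℝ) ^ 4)).comp
      (hadap k).measurable : Measurable[F k] fun ω => ((M k ω : ℝ)) ^ 4).stronglyMeasurable
  have hXint : ∀ k, Integrable (fun ω => ((M k ω : ℝ)) ^ 4) ν := by
    intro k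
    rw [hνdef]
    exact hint4 k S hSmeas subset_rfl
  have hsub : Submartingale (fun k ω => ((M k ω : ℝ)) ^ 4) F ν := by
    refine submartingale_of_setIntegral_le_succ hXadp hXint ?_
    intro i s hs
    have hsm : MeasurableSet s := F.le i s hs
    beta_reduce
    rw [hνdef, Measure.restrict_restrict hsm]
    have hmeas_t : MeasurableSet (s ∩ S) := hsm.inter hSmeas
    have hkey := key (fun a : ℕ => (a : ℝ) ^ 4) i (m + i) (s ∩ S)
      (hs.inter (hSF i)) (fun ω hω => hSbound i ω hω.2)
    beta_reduce at hkey
    rw [hkey]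
    refine setIntegral_mono_on (hint4 i (s ∩ S) hmeas_t Set.inter_subset_right) ?_ hmeas_t ?_
    · refine hbdd_int
        (fun a : ℕ => (((a : ℝ) + 1) * ((a + 1 : ℕ) : ℝ) ^ 4
          + ((a : ℝ) - 1) * ((a - 1 : ℕ) : ℝ) ^ 4) / (2 * (a : ℝ)))
        i (s ∩ S) (((m + i : ℕ) : ℝ) ^ 4 + 10 * ((m + i : ℕ) : ℝ) ^ 2 + 5) hmeas_t ?_
      intro ω hω
      have hb1 : 1 ≤ M i ω := hpos i ω
      have hle : ((M i ω : ℕ) : ℝ) ≤ ((m + i : ℕ) : ℝ) := by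
        exact_mod_cast hSbound i ω hω.2
      have h0 : (0 : ℝ) ≤ ((M i ω : ℕ) : ℝ) := by positivity
      beta_reduce
      rw [gcb_A4 (M i ω) hb1, Real.norm_eq_abs, abs_of_nonneg (by positivity)]
      nlinarith [pow_le_pow_left₀ h0 hle 4, pow_le_pow_left₀ h0 hle 2]
    · intro ω _
      rw [gcb_A4 (M i ω) (hpos i ω)]
      nlinarith [sq_nonneg ((M i ω : ℝ))]
  have hXnonneg : (0 : ℕ → Ω → ℝ) ≤ fun k ω => ((M k ω : ℝ)) ^ 4 := by
    intro k ω
    positivity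
  -- Doob bound
  have hEbound : ∀ (τ : ℝ≥0) (N : ℕ), τ ≠ 0 →
      ν {ω | (τ : ℝ) ≤ (Finset.range (N + 1)).sup' Finset.nonempty_range_add_one
          fun i => ((M i ω : ℝ)) ^ 4}
        ≤ ENNReal.ofReal (C * ((N : ℝ) + 1) ^ 2) / τ := by
    intro τ N hτ
    have h1 := maximal_ineq hsub hXnonneg (ε := τ) N
    have h2 : (∫ ω in {ω | (τ : ℝ) ≤ (Finset.range (N + 1)).sup' Finset.nonempty_range_add_one
        fun i => ((M i ω : ℝ)) ^ 4}, ((M N ω : ℝ)) ^ 4 ∂ν) ≤ C * ((N : ℝ) + 1) ^ 2 := by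
      refine le_trans (setIntegral_le_integral (hXint N)
        (Filter.Eventually.of_forall fun ω => by positivity)) ?_
      rw [hνdef]
      exact hb N
    have h1' : (τ : ℝ≥0∞) * ν {ω | (τ : ℝ) ≤ (Finset.range (N + 1)).sup'
          Finset.nonempty_range_add_one fun i => ((M i ω : ℝ)) ^ 4}
        ≤ ENNReal.ofReal (C * ((N : ℝ) + 1) ^ 2) := by
      refine le_trans ?_ (le_trans h1 (ENNReal.ofReal_le_ofReal h2))
      exact le_rfl
    rw [ENNReal.le_div_iff_mul_le (Or.inl (by exact_mod_cast hτ))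
      (Or.inl ENNReal.coe_ne_top), mul_comm]
    exact h1'
  -- Borel-Cantelli for each epsilon
  have hBC : ∀ j : ℕ, ∀ᵐ ω ∂ν, ∀ᶠ n in atTop,
      (M n ω : ℝ) / Real.sqrt (n * Real.log n) < 1 / (j + 1) := by
    intro j
    set ε : ℝ := 1 / ((j : ℝ) + 1) with hε
    have hε0 : 0 < ε := by positivity
    have hlog2 : 0 < Real.log 2 := Real.log_pos one_lt_two
    set δ : ℝ := ε ^ 4 * Real.log 2 ^ 2 with hδ
    have hδ0 : 0 < δ := by positivity
    set τ : ℕ → ℝ≥0 := fun k => Real.toNNReal (δ * 4 ^ k * k ^ 2) with hτdef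
    set E : ℕ → Set Ω := fun k => {ω | ((τ k : ℝ≥0) : ℝ)
        ≤ (Finset.range (2 ^ (k + 1) + 1)).sup' Finset.nonempty_range_add_one
          fun i => ((M i ω : ℝ)) ^ 4} with hEdef
    have hτval : ∀ k : ℕ, ((τ k : ℝ≥0) : ℝ) = δ * 4 ^ k * k ^ 2 := by
      intro k
      rw [hτdef]
      exact Real.coe_toNNReal _ (by positivity)
    have hEk : ∀ k : ℕ, 1 ≤ k →
        ν (E k) ≤ ENNReal.ofReal ((16 * C / δ) * (1 / (k : ℝ) ^ 2)) := by
      intro k hk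
      have hk0 : (0 : ℝ) < (k : ℝ) := by exact_mod_cast hk
      have hτpos : (0 : ℝ) < δ * 4 ^ k * k ^ 2 := by positivity
      have hτne : τ k ≠ 0 := by
        rw [hτdef]
        simp only [ne_eq, Real.toNNReal_eq_zero, not_le]
        exact hτpos
      refine le_trans (hEbound (τ k) (2 ^ (k + 1)) hτne) ?_
      have hcoe : (↑(τ k) : ℝ≥0∞) = ENNReal.ofReal (δ * 4 ^ k * k ^ 2) := by
        rw [hτdef, ENNReal.ofReal]
      rw [hcoe, ← ENNReal.ofReal_div_of_pos hτpos]
      refine ENNReal.ofReal_le_ofReal ?_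
      have h2k1 : (0 : ℝ) < (2 : ℝ) ^ k := by positivity
      have hcast : (((2 : ℕ) ^ (k + 1) : ℕ) : ℝ) = 2 * (2 : ℝ) ^ k := by push_cast; ring
      have hnum : C * ((((2 : ℕ) ^ (k + 1) : ℕ) : ℝ) + 1) ^ 2 ≤ 16 * C * 4 ^ k := by
        rw [hcast]
        have h4 : (4 : ℝ) ^ k = ((2 : ℝ) ^ k) ^ 2 := by
          rw [show (4 : ℝ) = 2 ^ 2 by norm_num, ← pow_mul, pow_mul']
        rw [h4]
        have hx1 : (1 : ℝ) ≤ (2 : ℝ) ^ k := by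
          exact_mod_cast Nat.one_le_two_pow (n := k)
        have hsq : (2 * (2 : ℝ) ^ k + 1) ^ 2 ≤ 16 * ((2 : ℝ) ^ k) ^ 2 := by nlinarith [hx1]
        calc C * (2 * (2 : ℝ) ^ k + 1) ^ 2 ≤ C * (16 * ((2 : ℝ) ^ k) ^ 2) :=
              mul_le_mul_of_nonneg_left hsq hC0
          _ = 16 * C * ((2 : ℝ) ^ k) ^ 2 := by ring
      calc C * ((((2 : ℕ) ^ (k + 1) : ℕ) : ℝ) + 1) ^ 2 / (δ * 4 ^ k * k ^ 2)
          ≤ 16 * C * 4 ^ k / (δ * 4 ^ k * k ^ 2) := by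
            exact div_le_div_of_nonneg_right hnum hτpos.le
        _ = (16 * C / δ) * (1 / (k : ℝ) ^ 2) := by
            field_simp
    have hpt : ∀ k : ℕ, ν (E (k + 1))
        ≤ ENNReal.ofReal ((16 * C / δ) * (1 / ((k + 1 : ℕ) : ℝ) ^ 2)) := fun k =>
      hEk (k + 1) (by omega)
    have hsummable : Summable (fun k : ℕ => (16 * C / δ) * (1 / ((k + 1 : ℕ) : ℝ) ^ 2)) := by
      apply Summable.mul_left
      have hbase : Summable (fun n : ℕ => 1 / (n : ℝ) ^ 2) :=
        Real.summable_one_div_nat_pow.mpr one_lt_two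
      exact (summable_nat_add_iff (f := fun n : ℕ => 1 / (n : ℝ) ^ 2) 1).mpr hbase
    have hsum : (∑' k, ν (E (k + 1))) ≠ ⊤ := by
      refine ne_top_of_le_ne_top ?_ (ENNReal.tsum_le_tsum hpt)
      rw [← ENNReal.ofReal_tsum_of_nonneg (fun k => by positivity) hsummable]
      exact ENNReal.ofReal_ne_top
    filter_upwards [ae_eventually_notMem hsum] with ω hω
    obtain ⟨K₀, hK₀⟩ := eventually_atTop.mp hω
    rw [eventually_atTop]
    refine ⟨max (2 ^ (K₀ + 1)) 2, fun n hn => ?_⟩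
    have hn2 : 2 ≤ n := le_trans (le_max_right _ _) hn
    have hnK : 2 ^ (K₀ + 1) ≤ n := le_trans (le_max_left _ _) hn
    have hkn : 2 ^ Nat.log 2 n ≤ n := Nat.pow_log_le_self 2 (by omega)
    have hnk : n < 2 ^ (Nat.log 2 n + 1) := Nat.lt_pow_succ_log_self (by norm_num) n
    have hkK : K₀ + 1 ≤ Nat.log 2 n := (Nat.le_log_iff_pow_le (by norm_num) (by omega)).mpr hnK
    set k := Nat.log 2 n with hkdef
    have hnotE : ω ∉ E k := by
      have h := hK₀ (k - 1) (by omega)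
      have hkeq : k - 1 + 1 = k := by omega
      rwa [hkeq] at h
    have hmem : n ∈ Finset.range (2 ^ (k + 1) + 1) := Finset.mem_range.mpr (by omega)
    have hXn : ((M n ω : ℝ)) ^ 4 < ((τ k : ℝ≥0) : ℝ) := by
      by_contra hcon
      push_neg at hcon
      exact hnotE (le_trans hcon (Finset.le_sup' (fun i => ((M i ω : ℝ)) ^ 4) hmem))
    rw [hτval k] at hXn
    have hn1 : (1 : ℝ) ≤ (n : ℝ) := by exact_mod_cast (by omega : 1 ≤ n)
    have hn2' : (2 : ℝ) ≤ (n : ℝ) := by exact_mod_cast hn2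
    have hlogn : 0 < Real.log n := Real.log_pos (by linarith)
    have hnlog0 : 0 < (n : ℝ) * Real.log n := by positivity
    have h2kn : ((2 : ℝ)) ^ k ≤ (n : ℝ) := by exact_mod_cast hkn
    have hklog : (k : ℝ) * Real.log 2 ≤ Real.log n := by
      rw [← Real.log_pow]
      exact Real.log_le_log (by positivity) h2kn
    have hfac : (2 : ℝ) ^ k * ((k : ℝ) * Real.log 2) ≤ (n : ℝ) * Real.log n := by
      refine mul_le_mul h2kn hklog ?_ ?_
      · positivity
      · linarith
    have hval : δ * 4 ^ k * (k : ℝ) ^ 2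
        = ε ^ 4 * ((2 : ℝ) ^ k * ((k : ℝ) * Real.log 2)) ^ 2 := by
      have h4 : (4 : ℝ) ^ k = ((2 : ℝ) ^ k) ^ 2 := by
        rw [show (4 : ℝ) = 2 ^ 2 by norm_num, ← pow_mul, pow_mul']
      rw [hδ, h4]
      ring
    have hXn2 : ((M n ω : ℝ)) ^ 4 < ε ^ 4 * ((n : ℝ) * Real.log n) ^ 2 := by
      rw [hval] at hXn
      refine lt_of_lt_of_le hXn ?_
      have hfl : 0 ≤ (2 : ℝ) ^ k * ((k : ℝ) * Real.log 2) := by positivity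
      exact mul_le_mul_of_nonneg_left (pow_le_pow_left₀ hfl hfac 2) (by positivity)
    have hsq : Real.sqrt ((n : ℝ) * Real.log n) ^ 2 = (n : ℝ) * Real.log n :=
      Real.sq_sqrt hnlog0.le
    have hlt4 : ((M n ω : ℝ)) ^ 4 < (ε * Real.sqrt ((n : ℝ) * Real.log n)) ^ 4 := by
      have hr : (ε * Real.sqrt ((n : ℝ) * Real.log n)) ^ 4
          = ε ^ 4 * (Real.sqrt ((n : ℝ) * Real.log n) ^ 2) ^ 2 := by ring
      rw [hr, hsq]
      exact hXn2
    have hlt : (M n ω : ℝ) < ε * Real.sqrt ((n : ℝ) * Real.log n) :=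
      lt_of_pow_lt_pow_left₀ 4 (by positivity) hlt4
    rw [div_lt_iff₀ (Real.sqrt_pos.mpr hnlog0)]
    exact hlt
  rw [← ae_all_iff] at hBC
  filter_upwards [hBC] with ω hω
  rw [tendsto_order]
  constructor
  · intro a ha
    refine Eventually.of_forall fun n => lt_of_lt_of_le ha ?_
    positivity
  · intro a ha
    obtain ⟨j, hj⟩ := exists_nat_one_div_lt ha
    filter_upwards [hω j] with n hn
    exact lt_trans hn hj

/-- For the Markov chain `(M_n)` with
`P(ξ_n = ±1 | M_n = m) = (m±1)/(2m)`, one has `M_n / √(n log n) → 0` almost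
surely as `n → ∞`. -/
theorem growth_chain_boundary_sublinear
    {Ω : Type*} [MeasurableSpace Ω] (μ : Measure Ω) [IsProbabilityMeasure μ]
    (M : ℕ → Ω → ℕ) (hMmeas : ∀ n, Measurable (M n))
    (hpos : ∀ n ω, 1 ≤ M n ω)
    (hstep : ∀ n ω, M (n + 1) ω = M n ω + 1 ∨ M (n + 1) ω + 1 = M n ω)
    (hup : ∀ (n m : ℕ) (A : Set Ω),
      MeasurableSet[(Filtration.natural M
        (fun n => (hMmeas n).stronglyMeasurable)) n] A →
      μ (A ∩ {ω | M n ω = m} ∩ {ω | M (n + 1) ω = M n ω + 1})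
        = ENNReal.ofReal (((m : ℝ) + 1) / (2 * m))
            * μ (A ∩ {ω | M n ω = m}))
    (hdown : ∀ (n m : ℕ) (A : Set Ω),
      MeasurableSet[(Filtration.natural M
        (fun n => (hMmeas n).stronglyMeasurable)) n] A →
      μ (A ∩ {ω | M n ω = m} ∩ {ω | M (n + 1) ω + 1 = M n ω})
        = ENNReal.ofReal (((m : ℝ) - 1) / (2 * m))
            * μ (A ∩ {ω | M n ω = m})) :
    ∀ᵐ ω ∂μ, Tendsto (fun n : ℕ => (M n ω : ℝ) / Real.sqrt (n * Real.log n))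
      atTop (nhds 0) := by
  classical
  have key := gcb_key μ M hMmeas hpos hstep hup hdown
  have main : ∀ m : ℕ, ∀ᵐ ω ∂(μ.restrict {ω' | M 0 ω' ≤ m}),
      Tendsto (fun n : ℕ => (M n ω : ℝ) / Real.sqrt (n * Real.log n)) atTop (nhds 0) :=
    fun m => gcb_main μ M hMmeas hpos hstep key m
  rw [ae_iff]
  set T := {ω | ¬ Tendsto (fun n : ℕ => (M n ω : ℝ) / Real.sqrt (n * Real.log n))
    atTop (nhds 0)} with hT
  have hsubT : T ⊆ ⋃ m : ℕ, T ∩ {ω' | M 0 ω' ≤ m} := fun ω hω =>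
    Set.mem_iUnion.mpr ⟨M 0 ω, hω, show M 0 ω ≤ M 0 ω from le_rfl⟩
  have hzero : ∀ m : ℕ, μ (T ∩ {ω' | M 0 ω' ≤ m}) = 0 := by
    intro m
    have h1 := main m
    rw [ae_iff] at h1
    have h2 : (μ.restrict {ω' | M 0 ω' ≤ m}) T = 0 := h1
    rwa [Measure.restrict_apply'
      (show MeasurableSet {ω' | M 0 ω' ≤ m} from
        hMmeas 0 ((Set.to_countable (Set.Iic m)).measurableSet))] at h2
  refine le_antisymm ?_ zero_le
  calc μ T ≤ μ (⋃ m : ℕ, T ∩ {ω' | M 0 ω' ≤ m}) := measure_mono hsubT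
    _ ≤ ∑' m : ℕ, μ (T ∩ {ω' | M 0 ω' ≤ m}) := measure_iUnion_le _
    _ = 0 := by simp [hzero]
end

section
/- For the Markov chain (M_n) with P(ξ_n = ±1 | M_n = m) = (m±1)/(2m), one has (M_n - Σ_{i=0}^n 1/M_i) / (√n · log n) → 0 almost surely as n → ∞. -/
open MeasureTheory Filter Finset
open scoped ENNReal NNReal Topology

namespace GrowthAux

lemma exp_quad {u : ℝ} (hu : |u| ≤ 1) : Real.exp u ≤ 1 + u + u ^ 2 := by
  have h := Real.exp_bound hu (n := 2) (by norm_num)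
  have h2 : ∑ m ∈ Finset.range 2, u ^ m / m.factorial = 1 + u := by
    simp [Finset.sum_range_succ]
  rw [h2] at h
  have h3 := (abs_sub_le_iff.1 h).1
  have h4 : |u| ^ 2 = u ^ 2 := sq_abs u
  have h5 : ((2:ℕ).succ : ℝ) / ((2:ℕ).factorial * 2) = 3 / 4 := by
    norm_num [Nat.factorial]
  nlinarith [sq_nonneg u]

lemma key_ineq {m : ℕ} (hm : 1 ≤ m) {t : ℝ} (ht : |t| ≤ 1 / 2) (s : ℝ) :
    Real.exp (t * (s + (1 - 1 / (m : ℝ)))) * (((m : ℝ) + 1) / (2 * m))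
      + Real.exp (t * (s - (1 + 1 / (m : ℝ)))) * (((m : ℝ) - 1) / (2 * m))
      ≤ Real.exp (4 * t ^ 2) * Real.exp (t * s) := by
  have hm' : (1 : ℝ) ≤ (m : ℝ) := by exact_mod_cast hm
  have hmpos : (0 : ℝ) < m := by linarith
  set x : ℝ := 1 - 1 / (m : ℝ) with hxdef
  set y : ℝ := -(1 + 1 / (m : ℝ)) with hydef
  have hinv0 : 0 < ((m : ℝ))⁻¹ := by positivity
  have hinv1 : ((m : ℝ))⁻¹ ≤ 1 := inv_le_one_of_one_le₀ hm'
  have hxabs : |x| ≤ 2 := by rw [abs_le]; constructor <;> simp [hxdef] <;> linarith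
  have hyabs : |y| ≤ 2 := by rw [abs_le]; constructor <;> simp [hydef] <;> linarith
  have htx : |t * x| ≤ 1 := by
    rw [abs_mul]
    calc |t| * |x| ≤ (1/2) * 2 := by
          apply mul_le_mul ht hxabs (abs_nonneg _) (by norm_num)
      _ = 1 := by norm_num
  have hty : |t * y| ≤ 1 := by
    rw [abs_mul]
    calc |t| * |y| ≤ (1/2) * 2 := by
          apply mul_le_mul ht hyabs (abs_nonneg _) (by norm_num)
      _ = 1 := by norm_num
  have e1 := exp_quad htx
  have e2 := exp_quad hty
  set p : ℝ := ((m : ℝ) + 1) / (2 * m) with hpdef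
  set q : ℝ := ((m : ℝ) - 1) / (2 * m) with hqdef
  have hp : 0 ≤ p := by positivity
  have hq : 0 ≤ q := by
    apply div_nonneg <;> linarith
  have hsum : p + q = 1 := by
    rw [hpdef, hqdef]; field_simp; ring
  have hmean : x * p + y * q = 0 := by
    rw [hpdef, hqdef, hxdef, hydef]; field_simp; ring
  have hx2 : x ^ 2 ≤ 4 := by nlinarith [abs_le.1 hxabs]
  have hy2 : y ^ 2 ≤ 4 := by nlinarith [abs_le.1 hyabs]
  clear_value x y p q
  have hbr : Real.exp (t * x) * p + Real.exp (t * y) * q ≤ 1 + 4 * t ^ 2 := by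
    have b1 : Real.exp (t * x) * p ≤ (1 + t * x + (t * x) ^ 2) * p :=
      mul_le_mul_of_nonneg_right e1 hp
    have b2 : Real.exp (t * y) * q ≤ (1 + t * y + (t * y) ^ 2) * q :=
      mul_le_mul_of_nonneg_right e2 hq
    have c1 : (t * x) ^ 2 * p ≤ 4 * t ^ 2 * p := by
      have h := mul_le_mul_of_nonneg_right
        (mul_le_mul_of_nonneg_left hx2 (sq_nonneg t)) hp
      calc (t * x) ^ 2 * p = t ^ 2 * x ^ 2 * p := by ring
        _ ≤ t ^ 2 * 4 * p := h
        _ = 4 * t ^ 2 * p := by ring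
    have c2 : (t * y) ^ 2 * q ≤ 4 * t ^ 2 * q := by
      have h := mul_le_mul_of_nonneg_right
        (mul_le_mul_of_nonneg_left hy2 (sq_nonneg t)) hq
      calc (t * y) ^ 2 * q = t ^ 2 * y ^ 2 * q := by ring
        _ ≤ t ^ 2 * 4 * q := h
        _ = 4 * t ^ 2 * q := by ring
    have b1' : Real.exp (t * x) * p ≤ p + t * x * p + (t * x) ^ 2 * p :=
      b1.trans_eq (by ring)
    have b2' : Real.exp (t * y) * q ≤ q + t * y * q + (t * y) ^ 2 * q :=
      b2.trans_eq (by ring)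
    have hmt : t * x * p + t * y * q = 0 := by
      calc t * x * p + t * y * q = t * (x * p + y * q) := by ring
        _ = 0 := by rw [hmean]; ring
    have hc : 4 * t ^ 2 * p + 4 * t ^ 2 * q = 4 * t ^ 2 := by
      calc 4 * t ^ 2 * p + 4 * t ^ 2 * q = 4 * t ^ 2 * (p + q) := by ring
        _ = 4 * t ^ 2 := by rw [hsum]; ring
    linarith [b1', b2', c1, c2, hmt, hsum, hc]
  have hexp : (1 : ℝ) + 4 * t ^ 2 ≤ Real.exp (4 * t ^ 2) := by
    have := Real.add_one_le_exp (4 * t ^ 2)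
    linarith
  have hfin : Real.exp (t * x) * p + Real.exp (t * y) * q ≤ Real.exp (4 * t ^ 2) :=
    hbr.trans hexp
  have lhs1 : Real.exp (t * (s + x)) = Real.exp (t * s) * Real.exp (t * x) := by
    rw [← Real.exp_add]; ring_nf
  have lhs2 : Real.exp (t * (s + y)) = Real.exp (t * s) * Real.exp (t * y) := by
    rw [← Real.exp_add]; ring_nf
  have hy' : s - (1 + 1 / (m : ℝ)) = s + y := by rw [hydef]; ring
  have hx' : s + (1 - 1 / (m : ℝ)) = s + x := by rw [hxdef]
  rw [hy', lhs1, lhs2]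
  calc Real.exp (t * s) * Real.exp (t * x) * p + Real.exp (t * s) * Real.exp (t * y) * q
      = Real.exp (t * s) * (Real.exp (t * x) * p + Real.exp (t * y) * q) := by ring
    _ ≤ Real.exp (t * s) * Real.exp (4 * t ^ 2) :=
        mul_le_mul_of_nonneg_left hfin (Real.exp_nonneg _)
    _ = Real.exp (4 * t ^ 2) * Real.exp (t * s) := by ring


variable {Ω : Type*} [MeasurableSpace Ω]

/-- The compensated process. -/
noncomputable def S (M : ℕ → Ω → ℕ) (n : ℕ) (ω : Ω) : ℝ :=
  (M n ω : ℝ) - (M 0 ω : ℝ) - ∑ i ∈ Finset.range n, 1 / (M i ω : ℝ)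

lemma measurable_S (M : ℕ → Ω → ℕ) (hMmeas : ∀ n, Measurable (M n)) (n : ℕ) :
    Measurable (S M n) := by
  apply Measurable.sub
  · apply Measurable.sub
    · exact measurable_from_top.comp (hMmeas n)
    · exact measurable_from_top.comp (hMmeas 0)
  · apply Finset.measurable_sum
    intro i _
    simp only [one_div]
    exact (measurable_from_top.comp (hMmeas i)).inv

lemma S_up (M : ℕ → Ω → ℕ) {n : ℕ} {ω : Ω} (h : M (n + 1) ω = M n ω + 1) :
    S M (n + 1) ω = S M n ω + (1 - 1 / (M n ω : ℝ)) := by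
  simp only [S, Finset.sum_range_succ, h]
  push_cast
  ring

lemma S_down (M : ℕ → Ω → ℕ) {n : ℕ} {ω : Ω} (h : M (n + 1) ω + 1 = M n ω) :
    S M (n + 1) ω = S M n ω - (1 + 1 / (M n ω : ℝ)) := by
  have h' : (M (n + 1) ω : ℝ) = (M n ω : ℝ) - 1 := by
    have := congrArg (Nat.cast : ℕ → ℝ) h
    push_cast at this
    linarith
  simp only [S, Finset.sum_range_succ]
  rw [h']
  ring


lemma step_bound (μ : Measure Ω) [IsProbabilityMeasure μ]
    (M : ℕ → Ω → ℕ) (hMmeas : ∀ n, Measurable (M n))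
    (hpos : ∀ n ω, 1 ≤ M n ω)
    (hstep : ∀ n ω, M (n + 1) ω = M n ω + 1 ∨ M (n + 1) ω + 1 = M n ω)
    (hup : ∀ (n m : ℕ) (A : Set Ω),
      MeasurableSet[(Filtration.natural M
        (fun n => (hMmeas n).stronglyMeasurable)) n] A →
      μ (A ∩ {ω | M n ω = m} ∩ {ω | M (n + 1) ω = M n ω + 1})
        = ENNReal.ofReal (((m : ℝ) + 1) / (2 * m))
            * μ (A ∩ {ω | M n ω = m}))
    (hdown : ∀ (n m : ℕ) (A : Set Ω),
      MeasurableSet[(Filtration.natural M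
        (fun n => (hMmeas n).stronglyMeasurable)) n] A →
      μ (A ∩ {ω | M n ω = m} ∩ {ω | M (n + 1) ω + 1 = M n ω})
        = ENNReal.ofReal (((m : ℝ) - 1) / (2 * m))
            * μ (A ∩ {ω | M n ω = m}))
    (n : ℕ) {t : ℝ} (ht : |t| ≤ 1 / 2) :
    ∫⁻ ω, ENNReal.ofReal (Real.exp (t * S M (n + 1) ω)) ∂μ
      ≤ ENNReal.ofReal (Real.exp (4 * t ^ 2)) *
        ∫⁻ ω, ENNReal.ofReal (Real.exp (t * S M n ω)) ∂μ := by
  classical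
  set F := Filtration.natural M (fun n => (hMmeas n).stronglyMeasurable) with hF
  set A : (Fin (n + 1) → ℕ) → Set Ω :=
    fun v => {ω | ∀ i : Fin (n + 1), M i ω = v i} with hA
  have hAF : ∀ v, MeasurableSet[F n] (A v) := by
    intro v
    have hAi : A v = ⋂ i : Fin (n + 1), (M i) ⁻¹' {v i} := by
      ext ω; simp [hA, Set.mem_iInter]
    rw [hAi]
    refine MeasurableSet.iInter fun i => ?_
    have hle : (i : ℕ) ≤ n := Nat.lt_succ_iff.mp i.isLt
    have hsm : StronglyMeasurable[F (i : ℕ)] (M i) :=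
      Filtration.stronglyAdapted_natural (fun k => (hMmeas k).stronglyMeasurable) i
    exact ((hsm.mono (F.mono hle)).measurable) (measurableSet_singleton _)
  have hAmeas : ∀ v, MeasurableSet (A v) := fun v => F.le n _ (hAF v)
  have hcover : (⋃ v, A v) = Set.univ := by
    ext ω
    simp only [Set.mem_iUnion, Set.mem_univ, iff_true]
    exact ⟨fun i => M i ω, fun i => rfl⟩
  have hdisj : Pairwise (Function.onFun Disjoint A) := by
    intro v w hvw
    rw [Function.onFun, Set.disjoint_left]
    intro ω hv hw
    exact hvw (funext fun i => (hv i).symm.trans (hw i))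
  set U : Set Ω := {ω | M (n + 1) ω = M n ω + 1} with hU
  set D : Set Ω := {ω | M (n + 1) ω + 1 = M n ω} with hD
  have hUmeas : MeasurableSet U := by
    have h1 : U = ⋃ m : ℕ, ((M n) ⁻¹' {m} ∩ (M (n + 1)) ⁻¹' {m + 1}) := by
      ext ω
      simp only [hU, Set.mem_setOf_eq, Set.mem_iUnion, Set.mem_inter_iff,
        Set.mem_preimage, Set.mem_singleton_iff]
      exact ⟨fun h => ⟨M n ω, rfl, h⟩, fun ⟨m, h1, h2⟩ => by omega⟩
    rw [h1]
    exact MeasurableSet.iUnion fun m =>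
      ((hMmeas n) (measurableSet_singleton _)).inter
        ((hMmeas (n + 1)) (measurableSet_singleton _))
  have hDmeas : MeasurableSet D := by
    have h1 : D = ⋃ m : ℕ, ((M (n + 1)) ⁻¹' {m} ∩ (M n) ⁻¹' {m + 1}) := by
      ext ω
      simp only [hD, Set.mem_setOf_eq, Set.mem_iUnion, Set.mem_inter_iff,
        Set.mem_preimage, Set.mem_singleton_iff]
      exact ⟨fun h => ⟨M (n + 1) ω, rfl, by omega⟩, fun ⟨m, h1, h2⟩ => by omega⟩
    rw [h1]
    exact MeasurableSet.iUnion fun m =>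
      ((hMmeas (n + 1)) (measurableSet_singleton _)).inter
        ((hMmeas n) (measurableSet_singleton _))
  have hUDuniv : U ∪ D = Set.univ := by
    ext ω
    simp only [Set.mem_union, hU, hD, Set.mem_setOf_eq, Set.mem_univ, iff_true]
    exact hstep n ω
  have hUDdisj : Disjoint U D := by
    rw [Set.disjoint_left]
    intro ω h1 h2
    simp only [hU, hD, Set.mem_setOf_eq] at h1 h2
    omega
  have peratom : ∀ v, ∫⁻ ω in A v, ENNReal.ofReal (Real.exp (t * S M (n + 1) ω)) ∂μ
      ≤ ENNReal.ofReal (Real.exp (4 * t ^ 2)) *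
        ∫⁻ ω in A v, ENNReal.ofReal (Real.exp (t * S M n ω)) ∂μ := by
    intro v
    rcases Set.eq_empty_or_nonempty (A v) with he | ⟨ω₀, hω₀⟩
    · simp [he]
    set m := M n ω₀ with hmdef
    have hm1 : 1 ≤ m := hpos n ω₀
    have hm1R : (1 : ℝ) ≤ (m : ℝ) := by exact_mod_cast hm1
    have hMconst : ∀ ω ∈ A v, ∀ i, i ≤ n → M i ω = M i ω₀ := by
      intro ω hω i hi
      have h1 : M i ω = v ⟨i, Nat.lt_succ_of_le hi⟩ := hω ⟨i, Nat.lt_succ_of_le hi⟩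
      have h2 : M i ω₀ = v ⟨i, Nat.lt_succ_of_le hi⟩ := hω₀ ⟨i, Nat.lt_succ_of_le hi⟩
      rw [h1, h2]
    have hMn : ∀ ω ∈ A v, M n ω = m := fun ω hω => hMconst ω hω n le_rfl
    have hSconst : ∀ ω ∈ A v, S M n ω = S M n ω₀ := by
      intro ω hω
      simp only [S]
      rw [hMconst ω hω n le_rfl, hMconst ω hω 0 (Nat.zero_le n)]
      congr 1
      apply Finset.sum_congr rfl
      intro i hi
      rw [hMconst ω hω i (le_of_lt (Finset.mem_range.mp hi))]
    have hsplit : A v = (A v ∩ U) ∪ (A v ∩ D) := by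
      rw [← Set.inter_union_distrib_left, hUDuniv, Set.inter_univ]
    have hintU : ∫⁻ ω in A v ∩ U, ENNReal.ofReal (Real.exp (t * S M (n + 1) ω)) ∂μ
        = ENNReal.ofReal (Real.exp (t * (S M n ω₀ + (1 - 1 / (m : ℝ)))))
            * μ (A v ∩ U) := by
      rw [setLIntegral_congr_fun ((hAmeas v).inter hUmeas)
        (fun ω hω => ?_), setLIntegral_const]
      obtain ⟨hωA, hωU⟩ := hω
      have hup' : M (n + 1) ω = M n ω + 1 := hωU
      rw [S_up M hup', hMn ω hωA, hSconst ω hωA]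
    have hintD : ∫⁻ ω in A v ∩ D, ENNReal.ofReal (Real.exp (t * S M (n + 1) ω)) ∂μ
        = ENNReal.ofReal (Real.exp (t * (S M n ω₀ - (1 + 1 / (m : ℝ)))))
            * μ (A v ∩ D) := by
      rw [setLIntegral_congr_fun ((hAmeas v).inter hDmeas)
        (fun ω hω => ?_), setLIntegral_const]
      obtain ⟨hωA, hωD⟩ := hω
      have hdn' : M (n + 1) ω + 1 = M n ω := hωD
      rw [S_down M hdn', hMn ω hωA, hSconst ω hωA]
    have hint0 : ∫⁻ ω in A v, ENNReal.ofReal (Real.exp (t * S M n ω)) ∂μ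
        = ENNReal.ofReal (Real.exp (t * S M n ω₀)) * μ (A v) := by
      rw [setLIntegral_congr_fun (hAmeas v)
        (fun ω hω => ?_), setLIntegral_const]
      rw [hSconst ω hω]
    have hAself : A v ∩ {ω | M n ω = m} = A v :=
      Set.inter_eq_self_of_subset_left (fun ω hω => hMn ω hω)
    have hmuU : μ (A v ∩ U) = ENNReal.ofReal (((m : ℝ) + 1) / (2 * m)) * μ (A v) := by
      have h := hup n m (A v) (hAF v)
      rw [hAself] at h
      exact h
    have hmuD : μ (A v ∩ D) = ENNReal.ofReal (((m : ℝ) - 1) / (2 * m)) * μ (A v) := by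
      have h := hdown n m (A v) (hAF v)
      rw [hAself] at h
      exact h
    have hqnn : (0 : ℝ) ≤ ((m : ℝ) - 1) / (2 * m) := by
      apply div_nonneg <;> linarith
    have hpnn : (0 : ℝ) ≤ ((m : ℝ) + 1) / (2 * m) := by positivity
    calc ∫⁻ ω in A v, ENNReal.ofReal (Real.exp (t * S M (n + 1) ω)) ∂μ
        = ∫⁻ ω in (A v ∩ U) ∪ (A v ∩ D),
            ENNReal.ofReal (Real.exp (t * S M (n + 1) ω)) ∂μ := by rw [← hsplit]
      _ = ∫⁻ ω in A v ∩ U, ENNReal.ofReal (Real.exp (t * S M (n + 1) ω)) ∂μ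
          + ∫⁻ ω in A v ∩ D, ENNReal.ofReal (Real.exp (t * S M (n + 1) ω)) ∂μ :=
            lintegral_union ((hAmeas v).inter hDmeas)
              (hUDdisj.mono inf_le_right inf_le_right)
      _ = ENNReal.ofReal (Real.exp (t * (S M n ω₀ + (1 - 1 / (m : ℝ)))))
            * (ENNReal.ofReal (((m : ℝ) + 1) / (2 * m)) * μ (A v))
          + ENNReal.ofReal (Real.exp (t * (S M n ω₀ - (1 + 1 / (m : ℝ)))))
            * (ENNReal.ofReal (((m : ℝ) - 1) / (2 * m)) * μ (A v)) := by
            rw [hintU, hintD, hmuU, hmuD]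
      _ = (ENNReal.ofReal (Real.exp (t * (S M n ω₀ + (1 - 1 / (m : ℝ))))
              * (((m : ℝ) + 1) / (2 * (m : ℝ))))
            + ENNReal.ofReal (Real.exp (t * (S M n ω₀ - (1 + 1 / (m : ℝ))))
              * (((m : ℝ) - 1) / (2 * (m : ℝ))))) * μ (A v) := by
            rw [ENNReal.ofReal_mul (Real.exp_nonneg _),
              ENNReal.ofReal_mul (Real.exp_nonneg _)]
            ring
      _ ≤ ENNReal.ofReal (Real.exp (4 * t ^ 2) * Real.exp (t * S M n ω₀)) * μ (A v) := by
            apply mul_le_mul_left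
            rw [← ENNReal.ofReal_add
                (mul_nonneg (Real.exp_nonneg _) hpnn)
                (mul_nonneg (Real.exp_nonneg _) hqnn)]
            exact ENNReal.ofReal_le_ofReal (key_ineq hm1 ht (S M n ω₀))
      _ = ENNReal.ofReal (Real.exp (4 * t ^ 2)) *
            ∫⁻ ω in A v, ENNReal.ofReal (Real.exp (t * S M n ω)) ∂μ := by
            rw [hint0, ENNReal.ofReal_mul (Real.exp_nonneg _), mul_assoc]
  have e1 : ∫⁻ ω, ENNReal.ofReal (Real.exp (t * S M (n + 1) ω)) ∂μ
      = ∑' v, ∫⁻ ω in A v, ENNReal.ofReal (Real.exp (t * S M (n + 1) ω)) ∂μ := by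
    rw [← setLIntegral_univ, ← hcover]
    exact lintegral_iUnion hAmeas hdisj _
  have e2 : ∫⁻ ω, ENNReal.ofReal (Real.exp (t * S M n ω)) ∂μ
      = ∑' v, ∫⁻ ω in A v, ENNReal.ofReal (Real.exp (t * S M n ω)) ∂μ := by
    rw [← setLIntegral_univ, ← hcover]
    exact lintegral_iUnion hAmeas hdisj _
  rw [e1, e2, ← ENNReal.tsum_mul_left]
  exact ENNReal.tsum_le_tsum peratom


lemma mgf_bound (μ : Measure Ω) [IsProbabilityMeasure μ]
    (M : ℕ → Ω → ℕ) (hMmeas : ∀ n, Measurable (M n))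
    (hpos : ∀ n ω, 1 ≤ M n ω)
    (hstep : ∀ n ω, M (n + 1) ω = M n ω + 1 ∨ M (n + 1) ω + 1 = M n ω)
    (hup : ∀ (n m : ℕ) (A : Set Ω),
      MeasurableSet[(Filtration.natural M
        (fun n => (hMmeas n).stronglyMeasurable)) n] A →
      μ (A ∩ {ω | M n ω = m} ∩ {ω | M (n + 1) ω = M n ω + 1})
        = ENNReal.ofReal (((m : ℝ) + 1) / (2 * m))
            * μ (A ∩ {ω | M n ω = m}))
    (hdown : ∀ (n m : ℕ) (A : Set Ω),
      MeasurableSet[(Filtration.natural M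
        (fun n => (hMmeas n).stronglyMeasurable)) n] A →
      μ (A ∩ {ω | M n ω = m} ∩ {ω | M (n + 1) ω + 1 = M n ω})
        = ENNReal.ofReal (((m : ℝ) - 1) / (2 * m))
            * μ (A ∩ {ω | M n ω = m}))
    (n : ℕ) {t : ℝ} (ht : |t| ≤ 1 / 2) :
    ∫⁻ ω, ENNReal.ofReal (Real.exp (t * S M n ω)) ∂μ
      ≤ ENNReal.ofReal (Real.exp (4 * t ^ 2 * n)) := by
  have hpow : ∀ k : ℕ, ENNReal.ofReal (Real.exp (4 * t ^ 2)) ^ k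
      = ENNReal.ofReal (Real.exp (4 * t ^ 2 * k)) := by
    intro k
    rw [← ENNReal.ofReal_pow (Real.exp_nonneg _), ← Real.exp_nat_mul]
    congr 1
    ring
  rw [← hpow n]
  induction n with
  | zero =>
    have hS0 : ∀ ω : Ω, S M 0 ω = 0 := fun ω => by simp [S]
    simp [hS0, lintegral_const, measure_univ]
  | succ k ih =>
    calc ∫⁻ ω, ENNReal.ofReal (Real.exp (t * S M (k + 1) ω)) ∂μ
        ≤ ENNReal.ofReal (Real.exp (4 * t ^ 2)) *
            ∫⁻ ω, ENNReal.ofReal (Real.exp (t * S M k ω)) ∂μ :=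
          step_bound μ M hMmeas hpos hstep hup hdown k ht
      _ ≤ ENNReal.ofReal (Real.exp (4 * t ^ 2)) *
            ENNReal.ofReal (Real.exp (4 * t ^ 2)) ^ k := mul_le_mul_right ih _
      _ = ENNReal.ofReal (Real.exp (4 * t ^ 2)) ^ (k + 1) := by
          rw [pow_succ (ENNReal.ofReal (Real.exp (4 * t ^ 2))) k, mul_comm]

lemma chernoff (μ : Measure Ω) [IsProbabilityMeasure μ]
    (M : ℕ → Ω → ℕ) (hMmeas : ∀ n, Measurable (M n))
    (hpos : ∀ n ω, 1 ≤ M n ω)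
    (hstep : ∀ n ω, M (n + 1) ω = M n ω + 1 ∨ M (n + 1) ω + 1 = M n ω)
    (hup : ∀ (n m : ℕ) (A : Set Ω),
      MeasurableSet[(Filtration.natural M
        (fun n => (hMmeas n).stronglyMeasurable)) n] A →
      μ (A ∩ {ω | M n ω = m} ∩ {ω | M (n + 1) ω = M n ω + 1})
        = ENNReal.ofReal (((m : ℝ) + 1) / (2 * m))
            * μ (A ∩ {ω | M n ω = m}))
    (hdown : ∀ (n m : ℕ) (A : Set Ω),
      MeasurableSet[(Filtration.natural M
        (fun n => (hMmeas n).stronglyMeasurable)) n] A →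
      μ (A ∩ {ω | M n ω = m} ∩ {ω | M (n + 1) ω + 1 = M n ω})
        = ENNReal.ofReal (((m : ℝ) - 1) / (2 * m))
            * μ (A ∩ {ω | M n ω = m}))
    (n : ℕ) {t : ℝ} (ht : |t| ≤ 1 / 2) (c : ℝ) :
    μ {ω | c ≤ t * S M n ω} ≤ ENNReal.ofReal (Real.exp (4 * t ^ 2 * n - c)) := by
  set G := {ω | c ≤ t * S M n ω} with hG
  have hfmeas : Measurable fun ω => ENNReal.ofReal (Real.exp (t * S M n ω)) :=
    ENNReal.measurable_ofReal.comp
      (Real.measurable_exp.comp (measurable_const.mul (measurable_S M hMmeas n)))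
  have h1 : ENNReal.ofReal (Real.exp c) * μ G
      ≤ ENNReal.ofReal (Real.exp (4 * t ^ 2 * n)) := by
    calc ENNReal.ofReal (Real.exp c) * μ G
        = ∫⁻ _ in G, ENNReal.ofReal (Real.exp c) ∂μ := (setLIntegral_const _ _).symm
      _ ≤ ∫⁻ ω in G, ENNReal.ofReal (Real.exp (t * S M n ω)) ∂μ := by
          apply setLIntegral_mono hfmeas
          intro ω hω
          exact ENNReal.ofReal_le_ofReal (Real.exp_le_exp.mpr hω)
      _ ≤ ∫⁻ ω, ENNReal.ofReal (Real.exp (t * S M n ω)) ∂μ :=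
          setLIntegral_le_lintegral _ _
      _ ≤ ENNReal.ofReal (Real.exp (4 * t ^ 2 * n)) :=
          mgf_bound μ M hMmeas hpos hstep hup hdown n ht
  calc μ G = ENNReal.ofReal (Real.exp (-c)) * (ENNReal.ofReal (Real.exp c) * μ G) := by
        rw [← mul_assoc, ← ENNReal.ofReal_mul (Real.exp_nonneg _), ← Real.exp_add,
          neg_add_cancel, Real.exp_zero, ENNReal.ofReal_one, one_mul]
    _ ≤ ENNReal.ofReal (Real.exp (-c)) * ENNReal.ofReal (Real.exp (4 * t ^ 2 * n)) :=
        mul_le_mul_right h1 _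
    _ = ENNReal.ofReal (Real.exp (4 * t ^ 2 * n - c)) := by
        rw [← ENNReal.ofReal_mul (Real.exp_nonneg _), ← Real.exp_add]
        congr 1
        ring


lemma event_bound (μ : Measure Ω) [IsProbabilityMeasure μ]
    (M : ℕ → Ω → ℕ) (hMmeas : ∀ n, Measurable (M n))
    (hpos : ∀ n ω, 1 ≤ M n ω)
    (hstep : ∀ n ω, M (n + 1) ω = M n ω + 1 ∨ M (n + 1) ω + 1 = M n ω)
    (hup : ∀ (n m : ℕ) (A : Set Ω),
      MeasurableSet[(Filtration.natural M
        (fun n => (hMmeas n).stronglyMeasurable)) n] A →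
      μ (A ∩ {ω | M n ω = m} ∩ {ω | M (n + 1) ω = M n ω + 1})
        = ENNReal.ofReal (((m : ℝ) + 1) / (2 * m))
            * μ (A ∩ {ω | M n ω = m}))
    (hdown : ∀ (n m : ℕ) (A : Set Ω),
      MeasurableSet[(Filtration.natural M
        (fun n => (hMmeas n).stronglyMeasurable)) n] A →
      μ (A ∩ {ω | M n ω = m} ∩ {ω | M (n + 1) ω + 1 = M n ω})
        = ENNReal.ofReal (((m : ℝ) - 1) / (2 * m))
            * μ (A ∩ {ω | M n ω = m}))
    (k n : ℕ) (hn2 : 2 ≤ n)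
    (hlog : 32 * ((k : ℝ) + 1) ^ 2 ≤ Real.log n) :
    μ {ω | Real.sqrt n * Real.log n / ((k : ℝ) + 1) ≤ |S M n ω|}
      ≤ ENNReal.ofReal (2 / (n : ℝ) ^ 2) := by
  have hn2R : (2 : ℝ) ≤ (n : ℝ) := by exact_mod_cast hn2
  have hn0 : (0 : ℝ) < (n : ℝ) := by linarith
  have hQ : 0 < Real.sqrt n := Real.sqrt_pos.mpr hn0
  have hL : 0 < Real.log n := Real.log_pos (by linarith)
  have hK : (0 : ℝ) < (k : ℝ) + 1 := by positivity
  set Q := Real.sqrt n with hQdef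
  set L := Real.log n with hLdef
  set t := L / (8 * ((k : ℝ) + 1) * Q) with htdef
  set a := Q * L / ((k : ℝ) + 1) with hadef
  have hQsq : Q ^ 2 = (n : ℝ) := Real.sq_sqrt (le_of_lt hn0)
  have htpos : 0 < t := by positivity
  have hL2Q : L ≤ 2 * Q := by
    have h1 : Real.log Q ≤ Q - 1 := Real.log_le_sub_one_of_pos hQ
    have h2 : L = 2 * Real.log Q := by
      rw [hQdef, hLdef, Real.log_sqrt (le_of_lt hn0)]; ring
    linarith
  have hK1 : (1 : ℝ) ≤ (k : ℝ) + 1 := by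
    have : (0 : ℝ) ≤ (k : ℝ) := Nat.cast_nonneg k
    linarith
  have ht : |t| ≤ 1 / 2 := by
    rw [abs_of_pos htpos, htdef, div_le_iff₀ (by positivity)]
    nlinarith
  have hta : 4 * t ^ 2 * (n : ℝ) - t * a ≤ -(2 * L) := by
    have e1 : 4 * t ^ 2 * (n : ℝ) = L ^ 2 / (16 * ((k : ℝ) + 1) ^ 2) := by
      rw [htdef, div_pow, ← hQsq]
      field_simp
      ring
    have e2 : t * a = L ^ 2 / (8 * ((k : ℝ) + 1) ^ 2) := by
      rw [htdef, hadef]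
      field_simp
    have e3 : L ^ 2 / (16 * ((k : ℝ) + 1) ^ 2) - L ^ 2 / (8 * ((k : ℝ) + 1) ^ 2)
        = -(L ^ 2 / (16 * ((k : ℝ) + 1) ^ 2)) := by
      field_simp
      ring
    have key : 2 * L ≤ L ^ 2 / (16 * ((k : ℝ) + 1) ^ 2) := by
      rw [le_div_iff₀ (by positivity)]
      nlinarith [mul_le_mul_of_nonneg_right hlog (le_of_lt hL)]
    rw [e1, e2, e3]
    linarith
  have hsub : {ω | a ≤ |S M n ω|}
      ⊆ {ω | t * a ≤ t * S M n ω} ∪ {ω | t * a ≤ -t * S M n ω} := by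
    intro ω hω
    have hω' : a ≤ |S M n ω| := hω
    rcases le_abs.mp hω' with h | h
    · left
      exact mul_le_mul_of_nonneg_left h (le_of_lt htpos)
    · right
      show t * a ≤ -t * S M n ω
      calc t * a ≤ t * -S M n ω := mul_le_mul_of_nonneg_left h (le_of_lt htpos)
        _ = -t * S M n ω := by ring
  have hch1 := chernoff μ M hMmeas hpos hstep hup hdown n ht (t * a)
  have hch2 := chernoff μ M hMmeas hpos hstep hup hdown n
    (t := -t) (by rwa [abs_neg]) (t * a)
  have hexp2 : Real.exp (-(2 * L)) = ((n : ℝ) ^ 2)⁻¹ := by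
    have h2 : Real.exp (2 * L) = (n : ℝ) ^ 2 := by
      rw [show (2 : ℝ) * L = L + L by ring, Real.exp_add, hLdef, Real.exp_log hn0]
      ring
    rw [Real.exp_neg, h2]
  calc μ {ω | a ≤ |S M n ω|}
      ≤ μ ({ω | t * a ≤ t * S M n ω} ∪ {ω | t * a ≤ -t * S M n ω}) :=
        measure_mono hsub
    _ ≤ μ {ω | t * a ≤ t * S M n ω} + μ {ω | t * a ≤ -t * S M n ω} :=
        measure_union_le _ _
    _ ≤ ENNReal.ofReal (Real.exp (4 * t ^ 2 * n - t * a))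
        + ENNReal.ofReal (Real.exp (4 * (-t) ^ 2 * n - t * a)) := add_le_add hch1 hch2
    _ = 2 * ENNReal.ofReal (Real.exp (4 * t ^ 2 * n - t * a)) := by
        rw [neg_sq, two_mul]
    _ ≤ 2 * ENNReal.ofReal (Real.exp (-(2 * L))) := by
        apply mul_le_mul_right
        exact ENNReal.ofReal_le_ofReal (Real.exp_le_exp.mpr hta)
    _ = ENNReal.ofReal (2 / (n : ℝ) ^ 2) := by
        rw [hexp2, show ((2 : ℝ≥0∞)) = ENNReal.ofReal 2 by norm_num,
          ← ENNReal.ofReal_mul (by norm_num : (0:ℝ) ≤ 2), div_eq_mul_inv]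

end GrowthAux


/-- For the Markov chain `(M_n)` with
`P(ξ_n = ±1 | M_n = m) = (m±1)/(2m)`, one has
`(M_n - Σ_{i=0}^n 1/M_i) / (√n · log n) → 0` almost surely as `n → ∞`. -/
theorem growth_chain_compensated_sublinear
    {Ω : Type*} [MeasurableSpace Ω] (μ : Measure Ω) [IsProbabilityMeasure μ]
    (M : ℕ → Ω → ℕ) (hMmeas : ∀ n, Measurable (M n))
    (hpos : ∀ n ω, 1 ≤ M n ω)
    (hstep : ∀ n ω, M (n + 1) ω = M n ω + 1 ∨ M (n + 1) ω + 1 = M n ω)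
    (hup : ∀ (n m : ℕ) (A : Set Ω),
      MeasurableSet[(Filtration.natural M
        (fun n => (hMmeas n).stronglyMeasurable)) n] A →
      μ (A ∩ {ω | M n ω = m} ∩ {ω | M (n + 1) ω = M n ω + 1})
        = ENNReal.ofReal (((m : ℝ) + 1) / (2 * m))
            * μ (A ∩ {ω | M n ω = m}))
    (hdown : ∀ (n m : ℕ) (A : Set Ω),
      MeasurableSet[(Filtration.natural M
        (fun n => (hMmeas n).stronglyMeasurable)) n] A →
      μ (A ∩ {ω | M n ω = m} ∩ {ω | M (n + 1) ω + 1 = M n ω})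
        = ENNReal.ofReal (((m : ℝ) - 1) / (2 * m))
            * μ (A ∩ {ω | M n ω = m})) :
    ∀ᵐ ω ∂μ, Tendsto
      (fun n : ℕ =>
        ((M n ω : ℝ) - ∑ i ∈ Finset.range (n + 1), 1 / (M i ω : ℝ))
          / (Real.sqrt n * Real.log n))
      atTop (nhds 0) := by
  classical
  set E : ℕ → ℕ → Set Ω := fun k n =>
    {ω | Real.sqrt n * Real.log n / ((k : ℝ) + 1) ≤ |GrowthAux.S M n ω|} with hE
  have hBC : ∀ k : ℕ, ∀ᵐ ω ∂μ, ∀ᶠ n in atTop, ω ∉ E k n := by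
    intro k
    apply MeasureTheory.ae_eventually_notMem
    have hev : ∀ᶠ n : ℕ in atTop, μ (E k n) ≤ ENNReal.ofReal (2 / (n : ℝ) ^ 2) := by
      have h1 : ∀ᶠ n : ℕ in atTop, 32 * ((k : ℝ) + 1) ^ 2 ≤ Real.log n :=
        (Real.tendsto_log_atTop.comp tendsto_natCast_atTop_atTop).eventually_ge_atTop _
      filter_upwards [h1, eventually_ge_atTop 2] with n hn1 hn2
      exact GrowthAux.event_bound μ M hMmeas hpos hstep hup hdown k n hn2 hn1
    obtain ⟨N, hN⟩ := eventually_atTop.mp hev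
    have hb : ∀ n, μ (E k n)
        ≤ (if n < N then (1 : ℝ≥0∞) else 0) + ENNReal.ofReal (2 / (n : ℝ) ^ 2) := by
      intro n
      by_cases h : n < N
      · simp only [if_pos h]
        exact le_add_right prob_le_one
      · simp only [if_neg h, zero_add]
        exact hN n (le_of_not_gt h)
    refine ne_top_of_le_ne_top ?_ (ENNReal.tsum_le_tsum hb)
    rw [ENNReal.tsum_add]
    apply ENNReal.add_ne_top.mpr
    constructor
    · have h2 : (∑' n : ℕ, (if n < N then (1 : ℝ≥0∞) else 0))
          = ∑ n ∈ Finset.range N, (if n < N then (1 : ℝ≥0∞) else 0) :=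
        tsum_eq_sum (fun n hn => if_neg (by simpa using hn))
      rw [h2]
      refine ne_of_lt (ENNReal.sum_lt_top.mpr fun n _ => ?_)
      split_ifs <;> simp
    · have hsumm : Summable (fun n : ℕ => 2 / (n : ℝ) ^ 2) := by
        have h3 := (Real.summable_one_div_nat_pow (p := 2)).mpr (by norm_num)
        have h4 := h3.mul_left 2
        refine h4.congr fun n => ?_
        ring
      rw [← ENNReal.ofReal_tsum_of_nonneg (fun n => by positivity) hsumm]
      exact ENNReal.ofReal_ne_top
  have hAE := (MeasureTheory.ae_all_iff).mpr hBC
  filter_upwards [hAE] with ω hω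
  set b : ℕ → ℝ := fun n => Real.sqrt n * Real.log n with hbdef
  have hbpos : ∀ᶠ n : ℕ in atTop, 0 < b n := by
    filter_upwards [eventually_ge_atTop 2] with n hn
    have hn2R : (2 : ℝ) ≤ (n : ℝ) := by exact_mod_cast hn
    have h0 : (0 : ℝ) < (n : ℝ) := by linarith
    exact mul_pos (Real.sqrt_pos.mpr h0) (Real.log_pos (by linarith))
  have hbtop : Tendsto b atTop atTop := by
    apply tendsto_atTop_mono' atTop ?_
      (Real.tendsto_log_atTop.comp tendsto_natCast_atTop_atTop)
    filter_upwards [eventually_ge_atTop 1] with n hn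
    have hn1 : (1 : ℝ) ≤ (n : ℝ) := by exact_mod_cast hn
    have h1 : (1 : ℝ) ≤ Real.sqrt n := by
      rw [show (1 : ℝ) = Real.sqrt 1 by simp]
      exact Real.sqrt_le_sqrt hn1
    have h2 : 0 ≤ Real.log n := Real.log_nonneg hn1
    show Real.log n ≤ b n
    calc Real.log n = 1 * Real.log n := (one_mul _).symm
      _ ≤ Real.sqrt n * Real.log n := mul_le_mul_of_nonneg_right h1 h2
  have hS0 : Tendsto (fun n => |GrowthAux.S M n ω| / b n) atTop (𝓝 0) := by
    rw [NormedAddCommGroup.tendsto_nhds_zero]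
    intro ε hε
    obtain ⟨k, hk⟩ := exists_nat_one_div_lt hε
    filter_upwards [hω k, hbpos] with n h1 h2
    have h1' : |GrowthAux.S M n ω| < b n / ((k : ℝ) + 1) := lt_of_not_ge h1
    have hnn : 0 ≤ |GrowthAux.S M n ω| / b n := div_nonneg (abs_nonneg _) h2.le
    rw [Real.norm_eq_abs, abs_of_nonneg hnn]
    calc |GrowthAux.S M n ω| / b n < (b n / ((k : ℝ) + 1)) / b n :=
          (div_lt_div_iff_of_pos_right h2).mpr h1'
      _ = 1 / ((k : ℝ) + 1) := by
          rw [div_div, mul_comm ((k : ℝ) + 1) (b n), ← div_div, div_self (ne_of_gt h2)]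
      _ < ε := hk
  have hconst : Tendsto (fun n => ((M 0 ω : ℝ) + 1) / b n) atTop (𝓝 0) :=
    Tendsto.div_atTop tendsto_const_nhds hbtop
  have hg : Tendsto
      (fun n => |GrowthAux.S M n ω| / b n + ((M 0 ω : ℝ) + 1) / b n) atTop (𝓝 0) := by
    simpa using hS0.add hconst
  apply squeeze_zero_norm' ?_ hg
  filter_upwards [hbpos] with n hbn
  have hM1 : (1 : ℝ) ≤ (M n ω : ℝ) := by exact_mod_cast hpos n ω
  have hM01 : (1 : ℝ) ≤ (M 0 ω : ℝ) := by exact_mod_cast hpos 0 ω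
  have hT : (M n ω : ℝ) - ∑ i ∈ Finset.range (n + 1), 1 / (M i ω : ℝ)
      = GrowthAux.S M n ω + ((M 0 ω : ℝ) - 1 / (M n ω : ℝ)) := by
    simp only [GrowthAux.S, Finset.sum_range_succ]
    ring
  have hTabs : |(M n ω : ℝ) - ∑ i ∈ Finset.range (n + 1), 1 / (M i ω : ℝ)|
      ≤ |GrowthAux.S M n ω| + ((M 0 ω : ℝ) + 1) := by
    rw [hT]
    have hp0 : (0 : ℝ) < (M n ω : ℝ) := by linarith
    have h2 : 0 ≤ 1 / (M n ω : ℝ) := by positivity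
    have h3 : 1 / (M n ω : ℝ) ≤ 1 := by
      rw [div_le_one hp0]; exact hM1
    calc |GrowthAux.S M n ω + ((M 0 ω : ℝ) - 1 / (M n ω : ℝ))|
        ≤ |GrowthAux.S M n ω| + |(M 0 ω : ℝ) - 1 / (M n ω : ℝ)| := abs_add_le _ _
      _ ≤ |GrowthAux.S M n ω| + ((M 0 ω : ℝ) + 1) := by
          have : |(M 0 ω : ℝ) - 1 / (M n ω : ℝ)| ≤ (M 0 ω : ℝ) + 1 :=
            abs_le.mpr ⟨by linarith, by linarith⟩
          linarith
  show ‖((M n ω : ℝ) - ∑ i ∈ Finset.range (n + 1), 1 / (M i ω : ℝ)) / b n‖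
      ≤ |GrowthAux.S M n ω| / b n + ((M 0 ω : ℝ) + 1) / b n
  rw [Real.norm_eq_abs, abs_div, abs_of_pos hbn, ← add_div]
  exact div_le_div_of_nonneg_right hTabs hbn.le
end

section
/- With n_t defined by n_1 = 0 and n_t = min{ s : s - n_{t-1} = M_s + M_{n_{t-1}} }, for every t one has max_{n_t < i ≤ n_{t+1}} M_i ≤ n_{t+1} - n_t; in fact max_{n_t < i ≤ n_{t+1}} M_i ≤ M_{n_t} + M_{n_{t+1}} = n_{t+1} - n_t. -/
open Finset

theorem lipschitz_aux (M : ℕ → ℕ)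
    (hstep : ∀ n, M (n + 1) = M n + 1 ∨ M (n + 1) + 1 = M n) :
    ∀ d a, M (a + d) ≤ M a + d ∧ M a ≤ M (a + d) + d := by
  intro d
  induction d with
  | zero => intro a; simp
  | succ k ih =>
    intro a
    have h1 := ih a
    have h2 := hstep (a + k)
    have : a + (k + 1) = (a + k) + 1 := by omega
    rw [this]
    omega

/-- With `n_t` defined by `n_1 = 0` and
`n_t = min{ s : s - n_{t-1} = M_s + M_{n_{t-1}} }`, for every `t` one has
`max_{n_t < i ≤ n_{t+1}} M_i ≤ n_{t+1} - n_t`; in fact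
`max_{n_t < i ≤ n_{t+1}} M_i ≤ M_{n_t} + M_{n_{t+1}} = n_{t+1} - n_t`.
Here `(M_n)` is a sequence of positive integers with `|M_{n+1} - M_n| = 1`. -/
theorem growth_process_max_boundary_in_strip
    (M : ℕ → ℕ) (hpos : ∀ n, 1 ≤ M n)
    (hstep : ∀ n, M (n + 1) = M n + 1 ∨ M (n + 1) + 1 = M n)
    (N : ℕ → ℕ) (hN1 : N 1 = 0)
    (hrec : ∀ t, 1 ≤ t →
      N (t + 1) = sInf {s | s = M s + M (N t) + N t})
    (hfin : ∀ t, 1 ≤ t → {s | s = M s + M (N t) + N t}.Nonempty) :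
    ∀ t, 1 ≤ t →
      (∀ i, N t < i → i ≤ N (t + 1) → M i ≤ N (t + 1) - N t) ∧
      M (N t) + M (N (t + 1)) = N (t + 1) - N t ∧
      (∀ i, N t < i → i ≤ N (t + 1) → M i ≤ M (N t) + M (N (t + 1))) := by
  intro t ht
  have hmem : N (t + 1) ∈ {s | s = M s + M (N t) + N t} := by
    rw [hrec t ht]; exact Nat.sInf_mem (hfin t ht)
  have heq : N (t + 1) = M (N (t + 1)) + M (N t) + N t := hmem
  have key : ∀ i, N t < i → i ≤ N (t + 1) → M i ≤ N (t + 1) - N t := by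
    intro i h1 h2
    have l1 := lipschitz_aux M hstep (i - N t) (N t)
    have l2 := lipschitz_aux M hstep (N (t + 1) - i) i
    have e1 : N t + (i - N t) = i := by omega
    have e2 : i + (N (t + 1) - i) = N (t + 1) := by omega
    rw [e1] at l1
    rw [e2] at l2
    omega
  refine ⟨key, by omega, fun i h1 h2 => ?_⟩
  have := key i h1 h2
  omega
end

section
/- For the growth process Markov chain (M_n) with stopping times n_t (completion of strip t), the transition probability between consecutive strip boundary lengths satisfies P(M_{n_{t+1}} = m+k | M_{n_t} = m) = ((m+k)/m) · 2^{-(2m+k)} · C(2m+k-1, m-1), for k = -m+1, -m+2, .... -/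
open MeasureTheory Finset


lemma aux_telescope (v : ℕ → ℕ) : ∀ T : ℕ, (∀ i ≤ T, 1 ≤ v i) →
    (∏ i ∈ Finset.range T, ((v (i+1) : ℝ) / (2 * v i)))
      = ((v T : ℝ) / v 0) * (1/2)^T := by
  intro T
  induction T with
  | zero =>
    intro h
    have h0 : (v 0 : ℝ) ≠ 0 := by have := h 0 le_rfl; positivity
    simp [div_self h0]
  | succ T ih =>
    intro h
    have hT : (v T : ℝ) ≠ 0 := by
      have := h T (Nat.le_succ T); positivity
    have h0 : (v 0 : ℝ) ≠ 0 := by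
      have := h 0 (Nat.zero_le _); positivity
    rw [Finset.prod_range_succ, ih (fun i hi => h i (le_trans hi (Nat.le_succ T)))]
    field_simp
    ring

lemma aux_card_paths (m q : ℕ) (hm : 1 ≤ m) (hq : 1 ≤ q) :
    (((Finset.range (m+q)).powersetCard m).filter (fun S => m+q-1 ∈ S)).card
      = (m+q-1).choose (m-1) := by
  classical
  have : (m+q-1).choose (m-1) = ((Finset.range (m+q-1)).powersetCard (m-1)).card := by
    rw [Finset.card_powersetCard, Finset.card_range]
  rw [this]
  apply Finset.card_bij (fun S _ => S.erase (m+q-1))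
  · intro S hS
    simp only [Finset.mem_filter, Finset.mem_powersetCard] at hS
    obtain ⟨⟨hsub, hcard⟩, hmem⟩ := hS
    simp only [Finset.mem_powersetCard]
    constructor
    · intro x hx
      simp only [Finset.mem_erase] at hx
      have := hsub hx.2
      simp only [Finset.mem_range] at *
      omega
    · rw [Finset.card_erase_of_mem hmem, hcard]
  · intro S1 h1 S2 h2 heq
    simp only [Finset.mem_filter, Finset.mem_powersetCard] at h1 h2
    have e1 : S1 = insert (m+q-1) (S1.erase (m+q-1)) := (Finset.insert_erase h1.2).symm
    have e2 : S2 = insert (m+q-1) (S2.erase (m+q-1)) := (Finset.insert_erase h2.2).symm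
    rw [e1, e2, heq]
  · intro S hS
    simp only [Finset.mem_powersetCard] at hS
    refine ⟨insert (m+q-1) S, ?_, ?_⟩
    · simp only [Finset.mem_filter, Finset.mem_powersetCard]
      have hnot : m+q-1 ∉ S := by
        intro h
        have := hS.1 h
        simp only [Finset.mem_range] at this
        omega
      refine ⟨⟨?_, ?_⟩, Finset.mem_insert_self _ _⟩
      · intro x hx
        rcases Finset.mem_insert.mp hx with h | h
        · simp only [Finset.mem_range]; omega
        · have := hS.1 h
          simp only [Finset.mem_range] at *
          omega
      · rw [Finset.card_insert_of_notMem hnot, hS.2]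
        omega
    · rw [Finset.erase_insert]
      intro h
      have := hS.1 h
      simp only [Finset.mem_range] at this
      omega

/-- For the growth-process Markov chain `(M_n)` with stopping
times `n_t` (completion of strip `t`), the transition probability between
consecutive strip boundary lengths satisfies
`P(M_{n_{t+1}} = m+k | M_{n_t} = m)
  = ((m+k)/m) · 2^{-(2m+k)} · C(2m+k-1, m-1)` for `k = -m+1, -m+2, …`,
stated here as an equality of joint measures. -/
theorem growth_process_strip_transition_probability
    {Ω : Type*} [MeasurableSpace Ω] (μ : Measure Ω) [IsProbabilityMeasure μ]
    (M : ℕ → Ω → ℕ) (hMmeas : ∀ n, Measurable (M n))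
    (hpos : ∀ n ω, 1 ≤ M n ω)
    (hstep : ∀ n ω, M (n + 1) ω = M n ω + 1 ∨ M (n + 1) ω + 1 = M n ω)
    (hup : ∀ (n m : ℕ) (A : Set Ω),
      MeasurableSet[(Filtration.natural M
        (fun n => (hMmeas n).stronglyMeasurable)) n] A →
      μ (A ∩ {ω | M n ω = m} ∩ {ω | M (n + 1) ω = M n ω + 1})
        = ENNReal.ofReal (((m : ℝ) + 1) / (2 * m))
            * μ (A ∩ {ω | M n ω = m}))
    (hdown : ∀ (n m : ℕ) (A : Set Ω),
      MeasurableSet[(Filtration.natural M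
        (fun n => (hMmeas n).stronglyMeasurable)) n] A →
      μ (A ∩ {ω | M n ω = m} ∩ {ω | M (n + 1) ω + 1 = M n ω})
        = ENNReal.ofReal (((m : ℝ) - 1) / (2 * m))
            * μ (A ∩ {ω | M n ω = m}))
    (N : ℕ → Ω → ℕ) (hN1 : ∀ ω, N 1 ω = 0)
    (hrec : ∀ t, 1 ≤ t → ∀ ω,
      N (t + 1) ω = sInf {s | N t ω < s ∧
        ((Finset.Ico (N t ω) s).filter
          (fun k => M (k + 1) ω < M k ω)).card = M (N t ω) ω})
    (hfin : ∀ t, 1 ≤ t → ∀ ω, {s | N t ω < s ∧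
        ((Finset.Ico (N t ω) s).filter
          (fun k => M (k + 1) ω < M k ω)).card = M (N t ω) ω}.Nonempty)
    (t m : ℕ) (ht : 1 ≤ t) (hm : 1 ≤ m) (k : ℤ) (hk : 1 - (m : ℤ) ≤ k) :
    μ ({ω | ((M (N (t + 1) ω) ω : ℤ)) = (m : ℤ) + k}
        ∩ {ω | M (N t ω) ω = m})
      = ENNReal.ofReal ((((m : ℝ) + (k : ℝ)) / m)
          * (2 : ℝ) ^ (-(2 * (m : ℤ) + k))
          * ((2 * (m : ℤ) + k - 1).toNat.choose (m - 1)))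
        * μ {ω | M (N t ω) ω = m} := by
  set F := Filtration.natural M (fun n => (hMmeas n).stronglyMeasurable) with hF
  -- M measurable wrt F s
  have hMF : ∀ k s : ℕ, k ≤ s → Measurable[F s] (M k) := by
    intro k s hks
    exact ((Filtration.stronglyAdapted_natural (fun n => (hMmeas n).stronglyMeasurable) k).measurable).mono
      (F.mono hks) le_rfl
  have hMset : ∀ (j s c : ℕ), j ≤ s → MeasurableSet[F s] {ω | M j ω = c} := by
    intro j s c hjs
    exact hMF j s hjs (measurableSet_singleton c)
  have hdownset : ∀ (j s : ℕ), j + 1 ≤ s → MeasurableSet[F s] {ω | M (j+1) ω < M j ω} := by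
    intro j s hjs
    exact measurableSet_lt (hMF (j+1) s hjs) (hMF j s (by omega))
  -- measurability of {N t = n}
  -- measurability of condition sets
  have hcondmeas : ∀ (n s' s : ℕ), s' ≤ s → MeasurableSet[F s]
      {ω | ((Finset.Ico n s').filter (fun k => M (k + 1) ω < M k ω)).card = M n ω} := by
    intro n s' s hs's
    by_cases hns : n ≤ s
    · have hf : Measurable[F s] (fun ω => ((Finset.Ico n s').filter (fun k => M (k + 1) ω < M k ω)).card) := by
        have heq : (fun ω => ((Finset.Ico n s').filter (fun k => M (k + 1) ω < M k ω)).card)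
            = fun ω => ∑ j ∈ Finset.Ico n s', (if M (j+1) ω < M j ω then 1 else 0) := by
          funext ω
          rw [Finset.card_filter]
        rw [heq]
        refine Finset.measurable_sum _ (fun j hj => ?_)
        refine Measurable.ite (hdownset j s ?_) measurable_const measurable_const
        simp only [Finset.mem_Ico] at hj
        omega
      have hset : {ω | ((Finset.Ico n s').filter (fun k => M (k + 1) ω < M k ω)).card = M n ω}
          = ⋃ c : ℕ, ((fun ω => ((Finset.Ico n s').filter (fun k => M (k + 1) ω < M k ω)).card) ⁻¹' {c}
              ∩ (M n) ⁻¹' {c}) := by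
        ext ω
        simp only [Set.mem_setOf_eq, Set.mem_iUnion, Set.mem_inter_iff, Set.mem_preimage,
          Set.mem_singleton_iff]
        constructor
        · intro h; exact ⟨M n ω, h, rfl⟩
        · rintro ⟨c, h1, h2⟩; rw [h1, h2]
      rw [hset]
      exact MeasurableSet.iUnion (fun c =>
        (hf (measurableSet_singleton c)).inter (hMF n s hns (measurableSet_singleton c)))
    ·
      -- Ico n s' = ∅ since s' ≤ s < n, so set = {ω | 0 = M n ω} = ∅ by hpos
      have hempty : Finset.Ico n s' = ∅ := by
        apply Finset.Ico_eq_empty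
        omega
      have : {ω | ((Finset.Ico n s').filter (fun k => M (k + 1) ω < M k ω)).card = M n ω}
          = (∅ : Set Ω) := by
        ext ω
        simp only [hempty, Finset.filter_empty, Finset.card_empty, Set.mem_setOf_eq,
          Set.mem_empty_iff_false, iff_false]
        have := hpos n ω
        omega
      rw [this]
      exact @MeasurableSet.empty Ω (F s)
  -- measurability of {N t = n}
  have hNmeas : ∀ u : ℕ, 1 ≤ u → ∀ n : ℕ, MeasurableSet[F n] {ω | N u ω = n} := by
    intro u
    induction u with
    | zero => omega
    | succ u ih =>
      intro _ s
      rcases Nat.eq_zero_or_pos u with hu | hu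
      · -- u = 0 : N 1 = 0
        subst hu
        by_cases hs : s = 0
        · have : {ω | N 1 ω = s} = Set.univ := by
            ext ω; simp [hN1 ω, hs]
          rw [this]; exact @MeasurableSet.univ Ω (F s)
        · have : {ω | N 1 ω = s} = ∅ := by
            ext ω; simp only [hN1 ω, Set.mem_setOf_eq, Set.mem_empty_iff_false, iff_false]; omega
          rw [this]; exact @MeasurableSet.empty Ω (F s)
      · -- u ≥ 1
        have hset : {ω | N (u+1) ω = s} =
            ⋃ n ∈ Finset.range s, ({ω | N u ω = n} ∩
              ({ω | ((Finset.Ico n s).filter (fun k => M (k + 1) ω < M k ω)).card = M n ω}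
               ∩ ⋂ s' ∈ Finset.Ioo n s,
                  {ω | ((Finset.Ico n s').filter (fun k => M (k + 1) ω < M k ω)).card = M n ω}ᶜ)) := by
          ext ω
          simp only [Set.mem_setOf_eq, Set.mem_iUnion, Set.mem_inter_iff, Finset.mem_range,
            Set.mem_iInter, Set.mem_compl_iff, Finset.mem_Ioo, exists_prop]
          constructor
          · intro h
            have hr := hrec u hu ω
            have hne := hfin u hu ω
            have hmem := Nat.sInf_mem hne
            rw [← hr, h] at hmem
            obtain ⟨h1, h2⟩ := hmem
            refine ⟨N u ω, h1, rfl, h2, ?_⟩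
            intro s' hs' hc
            have hle : N (u+1) ω ≤ s' := hr ▸ Nat.sInf_le ⟨hs'.1, hc⟩
            omega
          · rintro ⟨n, hns, hNn, hc, hmin⟩
            have hr := hrec u hu ω
            rw [hNn] at hr
            have hne := hfin u hu ω
            rw [hNn] at hne
            have hmem := Nat.sInf_mem hne
            have hle : sInf {s_1 | n < s_1 ∧ ((Finset.Ico n s_1).filter
                (fun k => M (k + 1) ω < M k ω)).card = M n ω} ≤ s := Nat.sInf_le ⟨hns, hc⟩
            obtain ⟨hm1, hm2⟩ := hmem
            rw [hr]
            by_contra hne2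
            have hlt : sInf {s_1 | n < s_1 ∧ ((Finset.Ico n s_1).filter
                (fun k => M (k + 1) ω < M k ω)).card = M n ω} < s := by omega
            exact hmin _ ⟨hm1, hlt⟩ hm2
        rw [hset]
        refine Finset.measurableSet_biUnion _ (fun n hn => ?_)
        simp only [Finset.mem_range] at hn
        refine (F.mono (by omega : n ≤ s) _ (ih hu n)).inter ?_
        refine (hcondmeas n s s le_rfl).inter ?_
        refine Finset.measurableSet_biInter _ (fun s' hs' => ?_)
        simp only [Finset.mem_Ioo] at hs'
        exact (hcondmeas n s' s (by omega)).compl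
  -- single step transition
  have stepLem : ∀ (n : ℕ) (A : Set Ω), MeasurableSet[F n] A → ∀ a b : ℕ, 1 ≤ a →
      (b = a + 1 ∨ b + 1 = a) →
      μ (A ∩ {ω | M n ω = a} ∩ {ω | M (n+1) ω = b})
        = ENNReal.ofReal ((b : ℝ) / (2 * a)) * μ (A ∩ {ω | M n ω = a}) := by
    intro n A hA a b ha hb
    rcases hb with hb | hb
    · have hseteq : A ∩ {ω | M n ω = a} ∩ {ω | M (n+1) ω = b}
          = A ∩ {ω | M n ω = a} ∩ {ω | M (n+1) ω = M n ω + 1} := by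
        ext ω
        simp only [Set.mem_inter_iff, Set.mem_setOf_eq]
        constructor
        · rintro ⟨⟨h1, h2⟩, h3⟩; exact ⟨⟨h1, h2⟩, by omega⟩
        · rintro ⟨⟨h1, h2⟩, h3⟩; exact ⟨⟨h1, h2⟩, by omega⟩
      rw [hseteq, hup n a A hA]
      congr 2
      subst hb
      push_cast
      ring
    · have hseteq : A ∩ {ω | M n ω = a} ∩ {ω | M (n+1) ω = b}
          = A ∩ {ω | M n ω = a} ∩ {ω | M (n+1) ω + 1 = M n ω} := by
        ext ω
        simp only [Set.mem_inter_iff, Set.mem_setOf_eq]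
        constructor
        · rintro ⟨⟨h1, h2⟩, h3⟩; exact ⟨⟨h1, h2⟩, by omega⟩
        · rintro ⟨⟨h1, h2⟩, h3⟩; exact ⟨⟨h1, h2⟩, by omega⟩
      rw [hseteq, hdown n a A hA]
      congr 2
      have : (a : ℝ) = (b : ℝ) + 1 := by exact_mod_cast hb.symm
      rw [this]
      ring
  -- path probability lemma
  have pathLem : ∀ (n : ℕ) (A : Set Ω), MeasurableSet[F n] A →
      ∀ (T : ℕ) (v : ℕ → ℕ), (∀ i, i ≤ T → 1 ≤ v i) →
      (∀ i, i < T → v (i+1) = v i + 1 ∨ v (i+1) + 1 = v i) →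
      μ (A ∩ ⋂ j ∈ Finset.range (T+1), {ω | M (n+j) ω = v j})
        = ENNReal.ofReal (∏ i ∈ Finset.range T, ((v (i+1) : ℝ) / (2 * v i)))
            * μ (A ∩ {ω | M n ω = v 0}) := by
    intro n A hA T
    induction T with
    | zero =>
      intro v hv _
      have : (⋂ j ∈ Finset.range 1, {ω | M (n+j) ω = v j}) = {ω | M n ω = v 0} := by
        simp
      rw [this]
      simp
    | succ T ih =>
      intro v hv hstepv
      set A' := A ∩ ⋂ j ∈ Finset.range (T+1), {ω | M (n+j) ω = v j} with hA'def
      have hA' : MeasurableSet[F (n+T)] A' := by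
        refine (F.mono (by omega : n ≤ n + T) _ hA).inter ?_
        refine Finset.measurableSet_biInter _ (fun j hj => ?_)
        simp only [Finset.mem_range] at hj
        exact hMset (n+j) (n+T) (v j) (by omega)
      have hseteq : A ∩ ⋂ j ∈ Finset.range (T+1+1), {ω | M (n+j) ω = v j}
          = A' ∩ {ω | M (n+T) ω = v T} ∩ {ω | M ((n+T)+1) ω = v (T+1)} := by
        have hsub : A' ∩ {ω | M (n+T) ω = v T} = A' := by
          apply Set.inter_eq_left.mpr
          intro ω hω
          have := hω.2
          simp only [Set.mem_iInter, Finset.mem_range] at this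
          exact this T (by omega)
        rw [hsub, hA'def]
        ext ω
        simp only [Set.mem_inter_iff, Set.mem_iInter, Finset.mem_range, Set.mem_setOf_eq]
        constructor
        · rintro ⟨h1, h2⟩
          refine ⟨⟨h1, fun j hj => h2 j (by omega)⟩, ?_⟩
          have h3 := h2 (T+1) (by omega)
          have he : n + T + 1 = n + (T+1) := by omega
          rw [he]
          exact h3
        · rintro ⟨⟨h1, h2⟩, h3⟩
          refine ⟨h1, fun j hj => ?_⟩
          rcases Nat.lt_or_ge j (T+1) with h | h
          · exact h2 j h
          · have hj' : j = T + 1 := by omega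
            subst hj'
            have he : n + (T+1) = n + T + 1 := by omega
            rw [he]
            exact h3
      have hstep1 := stepLem (n+T) A' hA' (v T) (v (T+1))
        (hv T (by omega)) (hstepv T (by omega))
      have hsub : A' ∩ {ω | M (n+T) ω = v T} = A' := by
        apply Set.inter_eq_left.mpr
        intro ω hω
        have := hω.2
        simp only [Set.mem_iInter, Finset.mem_range] at this
        exact this T (by omega)
      rw [hseteq, hstep1, hsub, ih v (fun i hi => hv i (by omega)) (fun i hi => hstepv i (by omega))]
      rw [← mul_assoc, Finset.prod_range_succ, ← ENNReal.ofReal_mul (by positivity)]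
      congr 2
      ring
  classical
  -- target value q and number of steps T
  have hq0 : 0 ≤ (m:ℤ) + k := by omega
  set q : ℕ := ((m:ℤ) + k).toNat with hqdef
  have hq : (q:ℤ) = (m:ℤ) + k := Int.toNat_of_nonneg hq0
  have hq1 : 1 ≤ q := by omega
  set T : ℕ := m + q with hTdef
  have hT2 : 2 ≤ T := by omega
  -- blocks
  set B : ℕ → Set Ω := fun n => {ω | N t ω = n} ∩ {ω | M n ω = m} with hBdef
  have hBmeasF : ∀ n, MeasurableSet[F n] (B n) :=
    fun n => (hNmeas t ht n).inter (hMset n n m le_rfl)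
  have hBmeas : ∀ n, MeasurableSet (B n) := fun n => F.le n _ (hBmeasF n)
  -- paths encoded as finsets of down positions
  set dS : Finset ℕ → ℕ → ℕ := fun S j => (S ∩ Finset.range j).card with hdSdef
  set vS : Finset ℕ → ℕ → ℕ := fun S j => m + j - 2 * dS S j with hvSdef
  set P : Finset (Finset ℕ) := ((Finset.range T).powersetCard m).filter (fun S => T - 1 ∈ S)
    with hPdef
  have hPmem : ∀ S ∈ P, S ⊆ Finset.range T ∧ S.card = m ∧ T - 1 ∈ S := by
    intro S hS
    simp only [hPdef, Finset.mem_filter, Finset.mem_powersetCard] at hS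
    exact ⟨hS.1.1, hS.1.2, hS.2⟩
  have hPcard : P.card = (T-1).choose (m-1) := by
    have := aux_card_paths m q hm hq1
    have he : m + q - 1 = T - 1 := by omega
    rw [he] at this
    exact this
  have hd0 : ∀ S, dS S 0 = 0 := by intro S; simp [hdSdef]
  have hdsucc : ∀ S j, dS S (j+1) = dS S j + (if j ∈ S then 1 else 0) := by
    intro S j
    simp only [hdSdef, Finset.range_add_one]
    rw [Finset.inter_comm, Finset.inter_comm S (Finset.range j)]
    by_cases hj : j ∈ S
    · rw [Finset.insert_inter_of_mem hj, if_pos hj,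
        Finset.card_insert_of_notMem (by simp)]
    · rw [Finset.insert_inter_of_notMem hj, if_neg hj, Nat.add_zero]
  have hdle : ∀ S j, dS S j ≤ j := by
    intro S j
    calc dS S j ≤ (Finset.range j).card := Finset.card_le_card Finset.inter_subset_right
    _ = j := Finset.card_range j
  have hdT : ∀ S ∈ P, dS S T = m := by
    intro S hS
    obtain ⟨hsub, hcard, _⟩ := hPmem S hS
    simp only [hdSdef]
    rw [Finset.inter_eq_left.mpr hsub, hcard]
  have hdlt : ∀ S ∈ P, ∀ j ≤ T - 1, dS S j ≤ m - 1 := by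
    intro S hS j hj
    obtain ⟨hsub, hcard, hTm⟩ := hPmem S hS
    have hss : S ∩ Finset.range j ⊆ S.erase (T-1) := by
      intro x hx
      simp only [Finset.mem_inter, Finset.mem_range] at hx
      simp only [Finset.mem_erase]
      exact ⟨by omega, hx.1⟩
    calc dS S j ≤ (S.erase (T-1)).card := Finset.card_le_card hss
    _ = m - 1 := by rw [Finset.card_erase_of_mem hTm, hcard]
  have hdbound : ∀ S ∈ P, ∀ j ≤ T, 2 * dS S j + 1 ≤ m + j := by
    intro S hS j hj
    rcases Nat.eq_or_lt_of_le hj with h | h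
    · have := hdT S hS
      subst h
      omega
    · have h1 := hdlt S hS j (by omega)
      have h2 := hdle S j
      omega
  have hv0 : ∀ S, vS S 0 = m := by
    intro S
    simp [hvSdef, hd0]
  have hvT : ∀ S ∈ P, vS S T = q := by
    intro S hS
    simp only [hvSdef, hdT S hS]
    omega
  have hvpos : ∀ S ∈ P, ∀ j, j ≤ T → 1 ≤ vS S j := by
    intro S hS j hj
    have := hdbound S hS j hj
    simp only [hvSdef]
    omega
  have hveq : ∀ S j, vS S j + 2 * dS S j = m + j ∨ ¬ (2 * dS S j + 1 ≤ m + j) := by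
    intro S j
    simp only [hvSdef]
    omega
  have hvstep : ∀ S ∈ P, ∀ i, i < T →
      ((vS S (i+1) = vS S i + 1 ∨ vS S (i+1) + 1 = vS S i)
        ∧ (i ∈ S ↔ vS S (i+1) < vS S i)) := by
    intro S hS i hi
    have h1 := hdsucc S i
    have h2 := hdbound S hS i (by omega)
    have h3 := hdbound S hS (i+1) (by omega)
    by_cases hiS : i ∈ S
    · rw [if_pos hiS] at h1
      simp only [hvSdef] at *
      constructor
      · omega
      · simp only [hiS, true_iff]
        omega
    · rw [if_neg hiS] at h1
      simp only [hvSdef] at *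
      constructor
      · omega
      · simp only [hiS, false_iff, not_lt]
        omega
  -- counting down-steps
  have keyDsucc : ∀ (n : ℕ) (ω : Ω) (j : ℕ),
      ((Finset.Ico n (n+j+1)).filter (fun k => M (k+1) ω < M k ω)).card
        = ((Finset.Ico n (n+j)).filter (fun k => M (k+1) ω < M k ω)).card
          + (if M (n+j+1) ω < M (n+j) ω then 1 else 0) := by
    intro n ω j
    have hIco : Finset.Ico n (n+j+1) = insert (n+j) (Finset.Ico n (n+j)) := by
      ext x
      simp only [Finset.mem_Ico, Finset.mem_insert]
      omega
    rw [hIco, Finset.filter_insert]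
    by_cases hd : M (n+j+1) ω < M (n+j) ω
    · rw [if_pos hd, if_pos hd, Finset.card_insert_of_notMem (by simp)]
    · rw [if_neg hd, if_neg hd, Nat.add_zero]
  have keyD : ∀ (n : ℕ) (ω : Ω) (j : ℕ),
      M (n+j) ω + 2 * ((Finset.Ico n (n+j)).filter (fun k => M (k+1) ω < M k ω)).card
        = M n ω + j := by
    intro n ω j
    induction j with
    | zero => simp
    | succ j ih =>
      have hks := keyDsucc n ω j
      have he : n + (j+1) = n + j + 1 := by omega
      rw [he]
      rw [hks]
      rcases hstep (n+j) ω with h | h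
      · have hnd : ¬ (M (n+j+1) ω < M (n+j) ω) := by omega
        rw [if_neg hnd]
        omega
      · have hd : M (n+j+1) ω < M (n+j) ω := by omega
        rw [if_pos hd]
        omega
  have keyDr : ∀ (n : ℕ) (ω : Ω) (j : ℕ),
      ((Finset.Ico n (n+j)).filter (fun k => M (k+1) ω < M k ω)).card
        = ((Finset.range j).filter (fun i => M (n+i+1) ω < M (n+i) ω)).card := by
    intro n ω j
    induction j with
    | zero => simp
    | succ j ih =>
      have he : n + (j+1) = n + j + 1 := by omega
      rw [he, keyDsucc n ω j, ih, Finset.range_add_one, Finset.filter_insert]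
      by_cases hd : M (n+j+1) ω < M (n+j) ω
      · rw [if_pos hd, if_pos hd, Finset.card_insert_of_notMem (by simp)]
      · rw [if_neg hd, if_neg hd, Nat.add_zero]
  have interLemma : ∀ (j : ℕ) (p : ℕ → Prop) (_ : DecidablePred p), j ≤ T →
      (Finset.range T).filter p ∩ Finset.range j = (Finset.range j).filter p := by
    intro j p hp hj
    ext x
    simp only [Finset.mem_inter, Finset.mem_filter, Finset.mem_range]
    constructor
    · rintro ⟨⟨h1, h2⟩, h3⟩; exact ⟨h3, h2⟩
    · rintro ⟨h1, h2⟩; exact ⟨⟨by omega, h2⟩, h1⟩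
  have hdowniff : ∀ (n : ℕ) (ω : Ω) (S : Finset ℕ), S ∈ P →
      (∀ j, j ≤ T → M (n+j) ω = vS S j) →
      ∀ i, i < T → (M (n+i+1) ω < M (n+i) ω ↔ i ∈ S) := by
    intro n ω S hS hall i hi
    have h1 := hall i (by omega)
    have h2 := hall (i+1) (by omega)
    have h3 := (hvstep S hS i hi).2
    have he : n + (i+1) = n + i + 1 := by omega
    rw [he] at h2
    rw [h1, h2]
    exact h3.symm
  have hDeq : ∀ (n : ℕ) (ω : Ω) (S : Finset ℕ), S ∈ P →
      (∀ j, j ≤ T → M (n+j) ω = vS S j) →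
      ∀ j, j ≤ T →
        ((Finset.Ico n (n+j)).filter (fun k => M (k+1) ω < M k ω)).card = dS S j := by
    intro n ω S hS hall j hj
    rw [keyDr n ω j]
    have hfe : (Finset.range j).filter (fun i => M (n+i+1) ω < M (n+i) ω)
        = (Finset.range j).filter (fun i => i ∈ S) := by
      apply Finset.filter_congr
      intro x hx
      simp only [Finset.mem_range] at hx
      first
      | exact hdowniff n ω S hS hall x (by omega)
      | exact propext (hdowniff n ω S hS hall x (by omega))
    rw [hfe, Finset.filter_mem_eq_inter]
    simp only [hdSdef]
    rw [Finset.inter_comm]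
  -- core characterization
  have keyChar : ∀ (n : ℕ) (ω : Ω), ω ∈ B n →
      (M (N (t+1) ω) ω = q ↔ ∃ S ∈ P, ∀ j, j ≤ T → M (n+j) ω = vS S j) := by
    intro n ω hω
    obtain ⟨hNt, hMn⟩ := hω
    simp only [Set.mem_setOf_eq] at hNt hMn
    have hrec' := hrec t ht ω
    have hfin' := hfin t ht ω
    rw [hNt, hMn] at hrec' hfin'
    have hmem := Nat.sInf_mem hfin'
    rw [← hrec'] at hmem
    obtain ⟨hlt, hcard⟩ := hmem
    have hmin : ∀ s', n < s' → s' < N (t+1) ω →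
        ((Finset.Ico n s').filter (fun j => M (j+1) ω < M j ω)).card ≠ m := by
      intro s' h1 h2 hc
      have h3 : N (t+1) ω ≤ s' := by
        rw [hrec']
        exact Nat.sInf_le ⟨h1, hc⟩
      omega
    constructor
    · -- forward
      intro hMq
      have hD := keyD n ω (N (t+1) ω - n)
      have hs0 : n + (N (t+1) ω - n) = N (t+1) ω := by omega
      rw [hs0, hMn] at hD
      rw [hcard, hMq] at hD
      have hτ : N (t+1) ω - n = T := by omega
      set S : Finset ℕ := (Finset.range T).filter (fun i => M (n+i+1) ω < M (n+i) ω)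
        with hSdef
      have hseq : n + T = N (t+1) ω := by omega
      have hdS_eq : ∀ j, j ≤ T → dS S j
          = ((Finset.Ico n (n+j)).filter (fun i => M (i+1) ω < M i ω)).card := by
        intro j hj
        simp only [hdSdef, hSdef]
        rw [interLemma j _ _ hj, ← keyDr n ω j]
      have hScard : S.card = m := by
        have h1 := hdS_eq T le_rfl
        have h2 : dS S T = S.card := by
          simp only [hdSdef]
          rw [Finset.inter_eq_left.mpr (Finset.filter_subset _ _)]
        rw [hseq] at h1
        rw [← h2, h1, hcard]
      have hTm : T - 1 ∈ S := by
        simp only [hSdef, Finset.mem_filter, Finset.mem_range]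
        refine ⟨by omega, ?_⟩
        by_contra hnd
        have hks := keyDsucc n ω (T-1)
        have he1 : n + (T-1) + 1 = n + T := by omega
        rw [he1] at hks
        rw [if_neg (by rwa [he1] at hnd)] at hks
        rw [hseq, hcard] at hks
        exact hmin (n+(T-1)) (by omega) (by omega) (by omega)
      have hSP : S ∈ P := by
        simp only [hPdef, Finset.mem_filter, Finset.mem_powersetCard]
        exact ⟨⟨Finset.filter_subset _ _, hScard⟩, hTm⟩
      refine ⟨S, hSP, ?_⟩
      intro j hj
      have hDj := keyD n ω j
      rw [hMn] at hDj
      have hdj := hdS_eq j hj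
      have hb := hdbound S hSP j hj
      simp only [hvSdef]
      omega
    · -- backward
      rintro ⟨S, hSP, hall⟩
      have hD := hDeq n ω S hSP hall
      have hmemT : n < n + T ∧
          ((Finset.Ico n (n+T)).filter (fun j => M (j+1) ω < M j ω)).card = m := by
        refine ⟨by omega, ?_⟩
        rw [hD T le_rfl, hdT S hSP]
      have hle : N (t+1) ω ≤ n + T := by
        rw [hrec']
        exact Nat.sInf_le hmemT
      have hge : n + T ≤ N (t+1) ω := by
        by_contra hlt2
        push_neg at hlt2
        have hj : N (t+1) ω - n ≤ T - 1 := by omega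
        have hD2 := hD (N (t+1) ω - n) (by omega)
        rw [show n + (N (t+1) ω - n) = N (t+1) ω by omega] at hD2
        have h2 := hdlt S hSP (N (t+1) ω - n) hj
        omega
      have hNs : N (t+1) ω = n + T := by omega
      rw [hNs, hall T le_rfl, hvT S hSP]
  -- path events
  set E : ℕ → Finset ℕ → Set Ω :=
    fun n S => B n ∩ ⋂ j ∈ Finset.range (T+1), {ω | M (n+j) ω = vS S j} with hEdef
  have hEmeasSet : ∀ n S, MeasurableSet (E n S) := by
    intro n S
    refine (hBmeas n).inter ?_
    refine Finset.measurableSet_biInter _ (fun j _ => ?_)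
    exact hMmeas (n+j) (measurableSet_singleton (vS S j))
  have hEmem : ∀ n S ω, ω ∈ E n S ↔ (ω ∈ B n ∧ ∀ j, j ≤ T → M (n+j) ω = vS S j) := by
    intro n S ω
    simp only [hEdef, Set.mem_inter_iff, Set.mem_iInter, Finset.mem_range, Set.mem_setOf_eq]
    constructor
    · rintro ⟨h1, h2⟩; exact ⟨h1, fun j hj => h2 j (by omega)⟩
    · rintro ⟨h1, h2⟩; exact ⟨h1, fun j hj => h2 j (by omega)⟩
  have hsplit : ∀ n, {ω | M (N (t+1) ω) ω = q} ∩ B n = ⋃ S ∈ P, E n S := by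
    intro n
    ext ω
    simp only [Set.mem_inter_iff, Set.mem_setOf_eq, Set.mem_iUnion, exists_prop]
    constructor
    · rintro ⟨h1, h2⟩
      obtain ⟨S, hS, hall⟩ := (keyChar n ω h2).mp h1
      exact ⟨S, hS, (hEmem n S ω).mpr ⟨h2, hall⟩⟩
    · rintro ⟨S, hS, hω⟩
      obtain ⟨h1, h2⟩ := (hEmem n S ω).mp hω
      exact ⟨(keyChar n ω h1).mpr ⟨S, hS, h2⟩, h1⟩
  have hdisjE : ∀ n, (↑P : Set (Finset ℕ)).PairwiseDisjoint (E n) := by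
    intro n S1 hS1 S2 hS2 hne
    have hS1P : S1 ∈ P := hS1
    have hS2P : S2 ∈ P := hS2
    simp only [Function.onFun]
    rw [Set.disjoint_left]
    intro ω h1 h2
    apply hne
    obtain ⟨hB1, hall1⟩ := (hEmem n S1 ω).mp h1
    obtain ⟨hB2, hall2⟩ := (hEmem n S2 ω).mp h2
    apply Finset.ext
    intro x
    by_cases hxT : x < T
    · rw [← hdowniff n ω S1 hS1P hall1 x hxT, ← hdowniff n ω S2 hS2P hall2 x hxT]
    · constructor
      · intro hx; exact absurd (Finset.mem_range.mp ((hPmem S1 hS1P).1 hx)) hxT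
      · intro hx; exact absurd (Finset.mem_range.mp ((hPmem S2 hS2P).1 hx)) hxT
  have hEval : ∀ n, ∀ S ∈ P, μ (E n S)
      = ENNReal.ofReal ((q : ℝ)/m * (1/2)^T) * μ (B n) := by
    intro n S hS
    have hp := pathLem n (B n) (hBmeasF n) T (vS S) (fun i hi => hvpos S hS i hi)
      (fun i hi => (hvstep S hS i hi).1)
    rw [aux_telescope (vS S) T (fun i hi => hvpos S hS i hi)] at hp
    rw [hvT S hS, hv0 S] at hp
    have hBsub : B n ∩ {ω | M n ω = m} = B n := by
      apply Set.inter_eq_left.mpr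
      intro ω hω
      exact hω.2
    rw [hBsub] at hp
    simp only [hEdef]
    exact hp
  have hnval : ∀ n, μ ({ω | M (N (t+1) ω) ω = q} ∩ B n)
      = ((T-1).choose (m-1) : ENNReal) * ENNReal.ofReal ((q : ℝ)/m * (1/2)^T) * μ (B n) := by
    intro n
    rw [hsplit n, measure_biUnion_finset (hdisjE n) (fun S _ => hEmeasSet n S)]
    rw [Finset.sum_congr rfl (fun S hS => hEval n S hS)]
    rw [Finset.sum_const, hPcard, nsmul_eq_mul, ← mul_assoc]
  have hconst : ENNReal.ofReal ((((m : ℝ) + (k : ℝ)) / m)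
          * (2 : ℝ) ^ (-(2 * (m : ℤ) + k))
          * ((2 * (m : ℤ) + k - 1).toNat.choose (m - 1)))
      = ((T-1).choose (m-1) : ENNReal) * ENNReal.ofReal ((q : ℝ)/m * (1/2)^T) := by
    have h1 : (2*(m:ℤ)+k-1).toNat = T - 1 := by omega
    have h2 : ((m:ℝ) + (k:ℝ)) = (q:ℝ) := by
      exact_mod_cast congrArg (fun z : ℤ => (z:ℝ)) hq.symm
    have h3 : (2:ℝ) ^ (-(2*(m:ℤ)+k)) = (1/2:ℝ)^T := by
      have he : (2*(m:ℤ)+k) = (T:ℤ) := by omega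
      rw [he, zpow_neg, zpow_natCast, one_div, inv_pow]
    rw [h1, h2, h3]
    rw [← ENNReal.ofReal_natCast ((T-1).choose (m-1)), ← ENNReal.ofReal_mul (by positivity)]
    congr 1
    ring
  have hLset : {ω | ((M (N (t + 1) ω) ω : ℤ)) = (m : ℤ) + k}
      = {ω | M (N (t+1) ω) ω = q} := by
    ext ω
    simp only [Set.mem_setOf_eq]
    omega
  have hU : {ω | M (N t ω) ω = m} = ⋃ n, B n := by
    ext ω
    simp only [Set.mem_setOf_eq, Set.mem_iUnion, hBdef, Set.mem_inter_iff]
    constructor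
    · intro h
      exact ⟨N t ω, rfl, h⟩
    · rintro ⟨n, h1, h2⟩
      exact h1 ▸ h2
  have hBdisj : Pairwise (Function.onFun Disjoint B) := by
    intro n1 n2 hne
    simp only [Function.onFun]
    rw [Set.disjoint_left]
    intro ω h1 h2
    have e1 : N t ω = n1 := h1.1
    have e2 : N t ω = n2 := h2.1
    exact hne (e1.symm.trans e2)
  have hQmeas : ∀ n, MeasurableSet ({ω | M (N (t+1) ω) ω = q} ∩ B n) := by
    intro n
    rw [hsplit n]
    exact Finset.measurableSet_biUnion _ (fun S _ => hEmeasSet n S)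
  calc μ ({ω | ((M (N (t + 1) ω) ω : ℤ)) = (m : ℤ) + k} ∩ {ω | M (N t ω) ω = m})
      = μ (⋃ n, ({ω | M (N (t+1) ω) ω = q} ∩ B n)) := by
        rw [hLset, hU, Set.inter_iUnion]
    _ = ∑' n, μ ({ω | M (N (t+1) ω) ω = q} ∩ B n) := by
        refine measure_iUnion ?_ hQmeas
        intro n1 n2 hne
        exact Disjoint.mono Set.inter_subset_right Set.inter_subset_right (hBdisj hne)
    _ = ∑' n, (((T-1).choose (m-1) : ENNReal) * ENNReal.ofReal ((q : ℝ)/m * (1/2)^T) * μ (B n)) :=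
        tsum_congr hnval
    _ = ((T-1).choose (m-1) : ENNReal) * ENNReal.ofReal ((q : ℝ)/m * (1/2)^T) * ∑' n, μ (B n) := by
        simp only [mul_assoc]
        rw [ENNReal.tsum_mul_left, ENNReal.tsum_mul_left]
    _ = ((T-1).choose (m-1) : ENNReal) * ENNReal.ofReal ((q : ℝ)/m * (1/2)^T)
          * μ {ω | M (N t ω) ω = m} := by
        rw [hU, measure_iUnion hBdisj hBmeas]
    _ = ENNReal.ofReal ((((m : ℝ) + (k : ℝ)) / m)
          * (2 : ℝ) ^ (-(2 * (m : ℤ) + k))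
          * ((2 * (m : ℤ) + k - 1).toNat.choose (m - 1)))
        * μ {ω | M (N t ω) ω = m} := by
        rw [← hconst]
end

section
/- For each m ≥ 1 and k ≥ -m+1, each trajectory of the Markov chain (M_n) (moving from state j to j±1 with probability (j±1)/(2j)) starting at m and ending at m+k after 2m+k steps, staying positive, has probability ((m+k)/m) · 2^{-(2m+k)}; in particular the product of the one-step probabilities along any such path depends only on the starting and ending values and the number of steps. -/
open Finset

/-- For each `m ≥ 1` and `k ≥ -m+1`, each trajectory of the
Markov chain `(M_n)` (moving from state `j` to `j±1` with probability
`(j±1)/(2j)`, i.e. a step from `j` to `j'` with `|j'-j|=1` has probability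
`j'/(2j)`) starting at `m`, ending at `m+k` after `N = 2m+k` steps, and
staying positive, has path probability (product of one-step probabilities)
equal to `((m+k)/m) · 2^{-(2m+k)}`; in particular the product depends only on
the starting value, the ending value and the number of steps. -/
theorem growth_path_probability
    (m : ℕ) (hm : 1 ≤ m) (k : ℤ) (hk : 1 - (m : ℤ) ≤ k)
    (Nn : ℕ) (hN : (Nn : ℤ) = 2 * (m : ℤ) + k)
    (x : ℕ → ℕ) (hx0 : x 0 = m) (hxN : (x Nn : ℤ) = (m : ℤ) + k)
    (hpos : ∀ i, i ≤ Nn → 1 ≤ x i)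
    (hstep : ∀ i, i < Nn → x (i + 1) = x i + 1 ∨ x (i + 1) + 1 = x i) :
    ∏ i ∈ Finset.range Nn, ((x (i + 1) : ℝ) / (2 * (x i : ℝ)))
      = (((m : ℝ) + (k : ℝ)) / m) * (2 : ℝ) ^ (-(2 * (m : ℤ) + k)) := by
  have key : ∀ n, n ≤ Nn → ∏ i ∈ Finset.range n, ((x (i + 1) : ℝ) / (2 * (x i : ℝ)))
      = (x n : ℝ) / (x 0 : ℝ) * (2 : ℝ) ^ (-(n : ℤ)) := by
    intro n hn
    induction n with
    | zero =>
      have h0 : (1:ℕ) ≤ x 0 := hpos 0 (Nat.zero_le _)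
      have : (x 0 : ℝ) ≠ 0 := by positivity
      simp [div_self this]
    | succ n ih =>
      have hn' : n ≤ Nn := Nat.le_of_succ_le hn
      have hxn : (x n : ℝ) ≠ 0 := by
        have := hpos n hn'; positivity
      have hx0' : (x 0 : ℝ) ≠ 0 := by
        have := hpos 0 (Nat.zero_le _); positivity
      rw [Finset.prod_range_succ, ih hn']
      rw [show (-(↑(n+1) : ℤ)) = -(n:ℤ) + (-1) by push_cast; ring, zpow_add₀ (by norm_num : (2:ℝ) ≠ 0)]
      field_simp
  have := key Nn le_rfl
  rw [this, hx0]
  have hm' : (m : ℝ) ≠ 0 := by positivity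
  rw [show (-(2 * (m : ℤ) + k)) = -(Nn : ℤ) by rw [hN]]
  have : (x Nn : ℝ) = (m : ℝ) + (k : ℝ) := by exact_mod_cast congrArg (Int.cast : ℤ → ℝ) hxN
  rw [this]
end

section
/- The number of lattice paths of length 2m+k with ±1 steps from m to m+k that stay strictly positive and end with a −1 step (equivalently, reach their m-th −1 step exactly at the final step) is C(2m+k-1, m-1). -/
open Finset

lemma sum_pm {N : ℕ} (ξ : Fin N → Bool) (A : Finset (Fin N)) :
    ∑ j ∈ A, (if ξ j then (1:ℤ) else -1)
      = ((A.filter (fun j => ξ j = true)).card : ℤ)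
        - ((A.filter (fun j => ξ j = false)).card : ℤ) := by
  rw [Finset.sum_ite, Finset.sum_const, Finset.sum_const]
  simp [Bool.not_eq_true]
  ring

lemma falseset_ext {N : ℕ} (ξ ξ' : Fin N → Bool)
    (h : Finset.univ.filter (fun j => ξ j = false)
       = Finset.univ.filter (fun j => ξ' j = false)) : ξ = ξ' := by
  funext j
  have := Finset.ext_iff.mp h j
  simp only [Finset.mem_filter, Finset.mem_univ, true_and] at this
  cases h1 : ξ j <;> cases h2 : ξ' j <;> simp_all

/-- The number of lattice paths of length `N = 2m+k` with `±1`
steps, starting at `m ≥ 1`, with exactly `m` down-steps (hence ending at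
`m+k`), staying strictly positive, and ending with a `−1` step (equivalently,
reaching their `m`-th `−1` step exactly at the final step) is
`C(2m+k-1, m-1)`. Steps are encoded by `ξ : Fin N → Bool`, `true = +1`,
`false = -1`. -/
theorem count_strip_paths
    (m : ℕ) (hm : 1 ≤ m) (k : ℤ) (hk : 1 - (m : ℤ) ≤ k)
    (Nn : ℕ) (hN : (Nn : ℤ) = 2 * (m : ℤ) + k) (hNpos : 0 < Nn) :
    ((Finset.univ : Finset (Fin Nn → Bool)).filter (fun ξ =>
        (Finset.univ.filter (fun i : Fin Nn => ξ i = false)).card = m ∧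
        (∀ i : Fin Nn, 1 ≤ (m : ℤ) +
          ∑ j ∈ Finset.univ.filter (fun j : Fin Nn => j ≤ i),
            (if ξ j then (1 : ℤ) else -1)) ∧
        ξ ⟨Nn - 1, Nat.sub_lt hNpos Nat.one_pos⟩ = false)).card
      = (Nn - 1).choose (m - 1) := by
  obtain ⟨n, rfl⟩ : ∃ n, Nn = n + 1 := ⟨Nn - 1, (Nat.succ_pred_eq_of_pos hNpos).symm⟩
  have hlast : (⟨n + 1 - 1, Nat.sub_lt hNpos Nat.one_pos⟩ : Fin (n+1)) = Fin.last n := rfl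
  -- Step 1: the positivity condition is implied by the other two.
  have hiff : ∀ ξ : Fin (n+1) → Bool,
      ((Finset.univ.filter (fun i : Fin (n+1) => ξ i = false)).card = m ∧
        (∀ i : Fin (n+1), 1 ≤ (m : ℤ) +
          ∑ j ∈ Finset.univ.filter (fun j : Fin (n+1) => j ≤ i),
            (if ξ j then (1 : ℤ) else -1)) ∧
        ξ ⟨n + 1 - 1, Nat.sub_lt hNpos Nat.one_pos⟩ = false)
      ↔ ((Finset.univ.filter (fun i : Fin (n+1) => ξ i = false)).card = m ∧
          ξ (Fin.last n) = false) := by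
    intro ξ
    rw [hlast]
    constructor
    · rintro ⟨h1, _, h3⟩; exact ⟨h1, h3⟩
    · rintro ⟨h1, h3⟩
      refine ⟨h1, ?_, h3⟩
      intro i
      rw [sum_pm]
      by_cases hi : i = Fin.last n
      · subst hi
        have hA : Finset.univ.filter (fun j : Fin (n+1) => j ≤ Fin.last n)
            = Finset.univ := by
          apply Finset.filter_true_of_mem
          intro j _; exact Fin.le_last j
        rw [hA]
        have hT : (Finset.univ.filter (fun j : Fin (n+1) => ξ j = true)).card
            + (Finset.univ.filter (fun j : Fin (n+1) => ξ j = false)).card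
            = n + 1 := by
          have h := Finset.card_filter_add_card_filter_not
              (s := (Finset.univ : Finset (Fin (n+1))))
              (p := fun j => ξ j = true)
          simp only [Bool.not_eq_true, Finset.card_univ, Fintype.card_fin] at h
          exact h
        have hNn : ((n:ℤ) + 1) = 2 * m + k := by exact_mod_cast hN
        have := hT
        rw [h1] at this
        have hTc : ((Finset.univ.filter (fun j : Fin (n+1) => ξ j = true)).card : ℤ)
            = (n : ℤ) + 1 - m := by
          have : ((Finset.univ.filter (fun j : Fin (n+1) => ξ j = true)).card : ℤ) + m
              = (n : ℤ) + 1 := by exact_mod_cast this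
          linarith
        rw [h1, hTc]
        linarith
      · -- i < last : the down steps so far avoid `last`, so ≤ m - 1
        set A := Finset.univ.filter (fun j : Fin (n+1) => j ≤ i) with hA
        have hsub : A.filter (fun j => ξ j = false)
            ⊆ (Finset.univ.filter (fun j : Fin (n+1) => ξ j = false)).erase (Fin.last n) := by
          intro j hj
          simp only [hA, Finset.mem_filter, Finset.mem_univ, true_and,
            Finset.mem_erase] at hj ⊢
          refine ⟨?_, hj.2⟩
          rintro rfl
          exact hi (le_antisymm (Fin.le_last i) hj.1)
        have hcard : (A.filter (fun j => ξ j = false)).card ≤ m - 1 := by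
          calc (A.filter (fun j => ξ j = false)).card
              ≤ ((Finset.univ.filter (fun j : Fin (n+1) => ξ j = false)).erase
                  (Fin.last n)).card := Finset.card_le_card hsub
            _ = m - 1 := by
                have hmem : Fin.last n ∈ Finset.univ.filter
                    (fun j : Fin (n+1) => ξ j = false) := by simp [h3]
                rw [Finset.card_erase_of_mem hmem, h1]
        have hc : ((A.filter (fun j => ξ j = false)).card : ℤ) ≤ (m : ℤ) - 1 := by
          have : ((A.filter (fun j => ξ j = false)).card : ℤ) ≤ ((m - 1 : ℕ) : ℤ) :=
            Int.ofNat_le.mpr hcard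
          omega
        have hT0 : (0:ℤ) ≤ ((A.filter (fun j => ξ j = true)).card : ℤ) :=
          Int.ofNat_nonneg _
        linarith
  have hfeq := Finset.filter_congr (s := (Finset.univ : Finset (Fin (n+1) → Bool)))
    (fun ξ _ => hiff ξ)
  -- Step 2: count via bijection with (m-1)-subsets of univ.erase last
  have hcount :
      ((Finset.univ : Finset (Fin (n+1) → Bool)).filter (fun ξ =>
        (Finset.univ.filter (fun i : Fin (n+1) => ξ i = false)).card = m ∧
        ξ (Fin.last n) = false)).card
      = (Finset.powersetCard (m-1)
          ((Finset.univ : Finset (Fin (n+1))).erase (Fin.last n))).card := by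
    apply Finset.card_bij
      (fun ξ _ => (Finset.univ.filter (fun j => ξ j = false)).erase (Fin.last n))
    · intro ξ hξ
      simp only [Finset.mem_filter, Finset.mem_univ, true_and] at hξ
      rw [Finset.mem_powersetCard]
      constructor
      · intro j hj
        simp only [Finset.mem_erase, Finset.mem_filter, Finset.mem_univ, true_and] at hj ⊢
        exact ⟨hj.1, trivial⟩
      · have hmem : Fin.last n ∈ Finset.univ.filter
            (fun j : Fin (n+1) => ξ j = false) := by simp [hξ.2]
        rw [Finset.card_erase_of_mem hmem, hξ.1]
    · intro ξ hξ ξ' hξ' h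
      simp only [Finset.mem_filter, Finset.mem_univ, true_and] at hξ hξ'
      apply falseset_ext
      have h1 : Fin.last n ∈ Finset.univ.filter (fun j => ξ j = false) := by simp [hξ.2]
      have h2 : Fin.last n ∈ Finset.univ.filter (fun j => ξ' j = false) := by simp [hξ'.2]
      rw [← Finset.insert_erase h1, ← Finset.insert_erase h2, h]
    · intro s hs
      rw [Finset.mem_powersetCard] at hs
      have hlast_notin : Fin.last n ∉ s := fun h => by
        have := hs.1 h; simp at this
      refine ⟨fun j => decide (j ∉ insert (Fin.last n) s), ?_, ?_⟩
      · simp only [Finset.mem_filter, Finset.mem_univ, true_and]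
        have hset : Finset.univ.filter
            (fun j : Fin (n+1) => decide (j ∉ insert (Fin.last n) s) = false)
            = insert (Fin.last n) s := by
          ext j; simp; tauto
        constructor
        · rw [hset, Finset.card_insert_of_notMem hlast_notin, hs.2]
          omega
        · simp
      · have hset : Finset.univ.filter
            (fun j : Fin (n+1) => decide (j ∉ insert (Fin.last n) s) = false)
            = insert (Fin.last n) s := by
          ext j; simp; tauto
        rw [hset, Finset.erase_insert hlast_notin]
  rw [hfeq, hcount, Finset.card_powersetCard]
  congr 1
  rw [Finset.card_erase_of_mem (Finset.mem_univ _)]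
  simp
end

section
/- The probabilities P(M_{n_{t+1}} = m+k | M_{n_t} = m) = ((m+k)/m) · 2^{-(2m+k)} · C(2m+k-1, m-1) sum to 1 over k = -m+1, -m+2, ... for every m ≥ 1. -/
lemma strip_key (n j : ℕ) :
    (j + 1) * ((n + 1 + j).choose n) = (n + 1) * ((j + n + 1).choose (n + 1)) := by
  have h1 : (n + 1 + j).choose n = (n + 1 + j).choose (j + 1) := by
    rw [← Nat.choose_symm (by omega : j + 1 ≤ n + 1 + j)]
    congr 1
    omega
  have h2 : (n + j + 1) * (n + j).choose j = (n + j + 1).choose (j + 1) * (j + 1) := by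
    simpa using Nat.add_one_mul_choose_eq (n + j) j
  have h3 : (n + j + 1) * (n + j).choose n = (n + j + 1).choose (n + 1) * (n + 1) := by
    simpa using Nat.add_one_mul_choose_eq (n + j) n
  have h4 : (n + j).choose j = (n + j).choose n := by
    rw [← Nat.choose_symm (by omega : n ≤ n + j)]
    congr 1
    omega
  have e1 : n + 1 + j = n + j + 1 := by omega
  have e2 : j + n + 1 = n + j + 1 := by omega
  calc (j + 1) * ((n + 1 + j).choose n)
      = (n + j + 1).choose (j + 1) * (j + 1) := by rw [h1, e1, mul_comm]
    _ = (n + j + 1) * (n + j).choose j := h2.symm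
    _ = (n + j + 1) * (n + j).choose n := by rw [h4]
    _ = (n + j + 1).choose (n + 1) * (n + 1) := h3
    _ = (n + 1) * ((j + n + 1).choose (n + 1)) := by rw [e2, mul_comm]

/-- The strip-transition probabilities
`p(m,k) = ((m+k)/m) · 2^{-(2m+k)} · C(2m+k-1, m-1)` sum to `1` over
`k = -m+1, -m+2, …` for every `m ≥ 1`. Here we reindex the sum by
`j = k + m - 1 ∈ ℕ` (so `k = j - m + 1`, `m + k = j + 1`,
`2m + k = m + j + 1` and `2m + k - 1 = m + j`). -/
theorem strip_transition_kernel_sums_to_one (m : ℕ) (hm : 1 ≤ m) :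
    ∑' j : ℕ,
      (((j : ℝ) + 1) / m) * (2 : ℝ) ^ (-((m : ℤ) + j + 1))
        * ((m + j).choose (m - 1)) = 1 := by
  obtain ⟨n, rfl⟩ : ∃ n, m = n + 1 := ⟨m - 1, by omega⟩
  have hr : ‖(1/2 : ℝ)‖ < 1 := by norm_num
  have h := hasSum_choose_mul_geometric_of_norm_lt_one (𝕜 := ℝ) (n + 1) hr
  have hm0 : (((n + 1 : ℕ) : ℝ)) ≠ 0 := by positivity
  have hterm : ∀ j : ℕ,
      (((j : ℝ) + 1) / ((n + 1 : ℕ) : ℝ)) * (2 : ℝ) ^ (-(((n + 1 : ℕ) : ℤ) + j + 1))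
        * ((n + 1 + j).choose (n + 1 - 1))
      = (1/2 : ℝ) ^ (n + 2) * (((j + (n + 1)).choose (n + 1)) * (1/2 : ℝ) ^ j) := by
    intro j
    have hkey : ((j : ℝ) + 1) * ((n + 1 + j).choose n)
        = (((n + 1 : ℕ) : ℝ)) * ((j + n + 1).choose (n + 1)) := by
      exact_mod_cast strip_key n j
    have hp : (2 : ℝ) ^ (-(((n + 1 : ℕ) : ℤ) + j + 1)) = (1/2 : ℝ) ^ (n + 2) * (1/2 : ℝ) ^ j := by
      rw [show (-(((n + 1 : ℕ) : ℤ) + j + 1)) = -((n + 2 + j : ℕ) : ℤ) by push_cast; ring,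
        zpow_neg, zpow_natCast, ← inv_pow, pow_add]
      norm_num
    have hc : (n + 1 + j).choose (n + 1 - 1) = (n + 1 + j).choose n := by norm_num
    have hc2 : j + (n + 1) = j + n + 1 := by omega
    rw [hp, hc, hc2, div_mul_eq_mul_div, div_mul_eq_mul_div, div_eq_iff hm0]
    linear_combination ((1/2 : ℝ) ^ (n + 2) * (1/2 : ℝ) ^ j) * hkey
  rw [tsum_congr hterm, tsum_mul_left, h.tsum_eq]
  rw [show (1:ℝ) - 1/2 = 1/2 by norm_num, one_div ((1/2:ℝ) ^ (n + 1 + 1))]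
  rw [show n + 2 = n + 1 + 1 from rfl, mul_inv_cancel₀ (by positivity)]
end
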